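/- arXiv:1209.0873 — 6 statements merged into one kernel-verified Lean document; each statement's English description precedes it below -/
import Mathlib

section
/- For every p > 1, every t ≥ 0, and all r, s ∈ (0,1), one has arcsin_p(M_t(r,s)) ≤ M_t(arcsin_p(r), arcsin_p(s)). -/
open Real Set

/-- Power mean `M_t(x,y)`. -/
noncomputable def powerMean (t x y : ℝ) : ℝ :=
  if t = 0 then Real.sqrt (x * y) else ((x ^ t + y ^ t) / 2) ^ (1 / t)

/-- Generalized arcsine: `arcsin_p x = ∫₀ˣ (1 - u^p)^(-1/p) du`. -/
noncomputable def arcsinp (p x : ℝ) : ℝ := ∫ u in (0:ℝ)..x, (1 - u ^ p) ^ (-(1 / p))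

/-- Generalized inverse hyperbolic tangent: `artanh_p x = ∫₀ˣ (1 - u^p)⁻¹ du`. -/
noncomputable def artanhp (p x : ℝ) : ℝ := ∫ u in (0:ℝ)..x, (1 - u ^ p)⁻¹

/-- Generalized arctangent: `arctan_p x = ∫₀ˣ (1 + u^p)⁻¹ du`. -/
noncomputable def arctanp (p x : ℝ) : ℝ := ∫ u in (0:ℝ)..x, (1 + u ^ p)⁻¹

/-- Generalized inverse hyperbolic sine: `arsinh_p x = ∫₀ˣ (1 + u^p)^(-1/p) du`. -/
noncomputable def arsinhp (p x : ℝ) : ℝ := ∫ u in (0:ℝ)..x, (1 + u ^ p) ^ (-(1 / p))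

/-- Generalized pi: `π_p = 2π/(p sin(π/p))`. -/
noncomputable def pip (p : ℝ) : ℝ := 2 * Real.pi / (p * Real.sin (Real.pi / p))

namespace ArcsinpAux

variable {p : ℝ}

/-- the integrand -/
noncomputable def d (p x : ℝ) : ℝ := (1 - x ^ p) ^ (-(1 / p))

lemma rpow_lt_one' (hp : 1 < p) {x : ℝ} (h0 : 0 ≤ x) (h1 : x < 1) : x ^ p < 1 :=
  Real.rpow_lt_one h0 h1 (by linarith)

lemma one_sub_pos (hp : 1 < p) {x : ℝ} (h0 : 0 ≤ x) (h1 : x < 1) : 0 < 1 - x ^ p := by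
  have := rpow_lt_one' hp h0 h1; linarith

lemma d_pos (hp : 1 < p) {x : ℝ} (h0 : 0 ≤ x) (h1 : x < 1) : 0 < d p x :=
  Real.rpow_pos_of_pos (one_sub_pos hp h0 h1) _

lemma d_contAt (hp : 1 < p) {x : ℝ} (h0 : 0 ≤ x) (h1 : x < 1) : ContinuousAt (d p) x := by
  have h1' : (1:ℝ) - x ^ p ≠ 0 := ne_of_gt (one_sub_pos hp h0 h1)
  have hinner : ContinuousAt (fun u : ℝ => 1 - u ^ p) x :=
    continuousAt_const.sub (Real.continuousAt_rpow_const x p (Or.inr (by linarith)))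
  exact hinner.rpow_const (Or.inl h1')

lemma d_intble (hp : 1 < p) {x : ℝ} (h0 : 0 ≤ x) (h1 : x < 1) :
    IntervalIntegrable (d p) MeasureTheory.volume 0 x := by
  apply ContinuousOn.intervalIntegrable
  intro u hu
  rw [uIcc_of_le h0] at hu
  exact (d_contAt hp hu.1 (lt_of_le_of_lt hu.2 h1)).continuousWithinAt

lemma hasDerivAt_arcsinp (hp : 1 < p) {x : ℝ} (hx : x ∈ Set.Ioo (0:ℝ) 1) :
    HasDerivAt (arcsinp p) (d p x) x := by
  have : HasDerivAt (fun u => ∫ t in (0:ℝ)..u, d p t) (d p x) x := by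
    apply intervalIntegral.integral_hasDerivAt_right (d_intble hp hx.1.le hx.2)
    · exact ContinuousAt.stronglyMeasurableAtFilter isOpen_Ioo
        (fun u hu => d_contAt hp hu.1.le hu.2) x hx
    · exact d_contAt hp hx.1.le hx.2
  exact this

lemma arcsinp_pos (hp : 1 < p) {x : ℝ} (hx : x ∈ Set.Ioo (0:ℝ) 1) : 0 < arcsinp p x := by
  apply intervalIntegral.intervalIntegral_pos_of_pos_on (d_intble hp hx.1.le hx.2)
  · exact fun u hu => d_pos hp hu.1.le (hu.2.trans hx.2)
  · exact hx.1

lemma arcsinp_le (hp : 1 < p) {x : ℝ} (hx : x ∈ Set.Ioo (0:ℝ) 1) :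
    arcsinp p x ≤ x * d p x := by
  have h : ∀ u ∈ Icc (0:ℝ) x, d p u ≤ d p x := by
    intro u hu
    have hup : u ^ p ≤ x ^ p := Real.rpow_le_rpow hu.1 hu.2 (by linarith)
    exact Real.rpow_le_rpow_of_nonpos (one_sub_pos hp hx.1.le hx.2)
      (by linarith) (neg_nonpos.mpr (by positivity))
  have := intervalIntegral.integral_mono_on hx.1.le (d_intble hp hx.1.le hx.2)
    intervalIntegrable_const h
  simpa [arcsinp, d, smul_eq_mul, sub_zero, mul_comm] using this

lemma hasDerivAt_L (hp : 1 < p) {x : ℝ} (hx : x ∈ Set.Ioo (0:ℝ) 1) :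
    HasDerivAt (fun u : ℝ => u * (1 - u ^ p) ^ (1 - 1 / p))
      (d p x * (1 - p * x ^ p)) x := by
  have hp0 : (0:ℝ) < p := by linarith
  have hx0 := hx.1
  have hA : 0 < 1 - x ^ p := one_sub_pos hp hx.1.le hx.2
  have hinner : HasDerivAt (fun u : ℝ => 1 - u ^ p) (-(p * x ^ (p - 1))) x := by
    simpa using (Real.hasDerivAt_rpow_const (p := p) (Or.inl (ne_of_gt hx0))).const_sub 1
  have houter : HasDerivAt (fun u : ℝ => (1 - u ^ p) ^ (1 - 1 / p))
      ((-(p * x ^ (p - 1))) * (1 - 1 / p) * (1 - x ^ p) ^ (1 - 1 / p - 1)) x :=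
    hinner.rpow_const (Or.inl (ne_of_gt hA))
  have hprod := (hasDerivAt_id x).fun_mul houter
  have e0 : (1:ℝ) - 1 / p - 1 = -(1 / p) := by ring
  have e1 : (1 - x ^ p) ^ (1 - 1 / p) = (1 - x ^ p) * (1 - x ^ p) ^ (-(1 / p)) := by
    rw [show (1:ℝ) - 1 / p = 1 + -(1 / p) by ring, Real.rpow_add hA, Real.rpow_one]
  have e2 : x * x ^ (p - 1) = x ^ p := by
    nth_rewrite 1 [← Real.rpow_one x]
    rw [← Real.rpow_add hx0]; norm_num
  refine hprod.congr_deriv (Eq.symm ?_)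
  rw [e0, e1, d]
  have hpne : p ≠ 0 := ne_of_gt hp0
  field_simp
  simp only [id]
  linear_combination (p - 1) * e2

lemma le_arcsinp (hp : 1 < p) {x : ℝ} (hx : x ∈ Set.Ioo (0:ℝ) 1) :
    x * (1 - x ^ p) ^ (1 - 1 / p) ≤ arcsinp p x := by
  have hp0 : (0:ℝ) < p := by linarith
  set F : ℝ → ℝ := fun u => arcsinp p u - u * (1 - u ^ p) ^ (1 - 1 / p) with hF
  have hmono : MonotoneOn F (Icc 0 x) := by
    apply monotoneOn_of_deriv_nonneg (convex_Icc 0 x)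
    · -- continuity
      apply ContinuousOn.sub
      · have hint : MeasureTheory.IntegrableOn (d p) (Icc 0 x) MeasureTheory.volume := by
          apply ContinuousOn.integrableOn_Icc
          exact fun u hu => (d_contAt hp hu.1 (lt_of_le_of_lt hu.2 hx.2)).continuousWithinAt
        have := intervalIntegral.continuousOn_primitive_interval
          (by rwa [uIcc_of_le hx.1.le] : MeasureTheory.IntegrableOn (d p)
            (uIcc 0 x) MeasureTheory.volume)
        rwa [uIcc_of_le hx.1.le] at this
      · intro u hu
        have h1 : u ^ p < 1 := rpow_lt_one' hp hu.1 (lt_of_le_of_lt hu.2 hx.2)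
        have hc : ContinuousAt (fun u : ℝ => 1 - u ^ p) u :=
          continuousAt_const.sub (Real.continuousAt_rpow_const u p (Or.inr (by linarith)))
        exact (continuousAt_id.mul (hc.rpow_const (Or.inr (by
          have : 1 / p < 1 := by rw [div_lt_one hp0]; linarith
          linarith)))).continuousWithinAt
    · rw [interior_Icc]
      intro u hu
      have hu' : u ∈ Set.Ioo (0:ℝ) 1 := ⟨hu.1, hu.2.trans hx.2⟩
      exact ((hasDerivAt_arcsinp hp hu').sub (hasDerivAt_L hp hu')).differentiableAt.differentiableWithinAt
    · rw [interior_Icc]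
      intro u hu
      have hu' : u ∈ Set.Ioo (0:ℝ) 1 := ⟨hu.1, hu.2.trans hx.2⟩
      rw [HasDerivAt.deriv (f := F) ((hasDerivAt_arcsinp hp hu').sub (hasDerivAt_L hp hu'))]
      have h1 : d p u - d p u * (1 - p * u ^ p) = d p u * (p * u ^ p) := by ring
      rw [h1]
      have := d_pos hp hu'.1.le hu'.2
      have := Real.rpow_pos_of_pos hu'.1 p
      positivity
  have h0 : F 0 = 0 := by
    simp [hF, arcsinp, intervalIntegral.integral_same]
  have := hmono (left_mem_Icc.mpr hx.1.le) (right_mem_Icc.mpr hx.1.le) hx.1.le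
  rw [h0] at this
  simpa [hF, sub_nonneg] using this

lemma x_mul_rpow (hx0 : 0 < ( x:ℝ)) : x * x ^ (p - 1) = x ^ p := by
  nth_rewrite 1 [← Real.rpow_one x]
  rw [← Real.rpow_add hx0]; norm_num

lemma hasDerivAt_d (hp : 1 < p) {x : ℝ} (hx : x ∈ Set.Ioo (0:ℝ) 1) :
    HasDerivAt (d p) (x ^ (p - 1) * (1 - x ^ p) ^ (-(1 / p) - 1)) x := by
  have hp0 : (0:ℝ) < p := by linarith
  have hA : 0 < 1 - x ^ p := one_sub_pos hp hx.1.le hx.2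
  have hinner : HasDerivAt (fun u : ℝ => 1 - u ^ p) (-(p * x ^ (p - 1))) x := by
    simpa using (Real.hasDerivAt_rpow_const (p := p) (Or.inl (ne_of_gt hx.1))).const_sub 1
  have h := hinner.rpow_const (p := -(1 / p)) (Or.inl (ne_of_gt hA))
  refine h.congr_deriv (Eq.symm ?_)
  have hpne : p ≠ 0 := ne_of_gt hp0
  field_simp

/-- phi(x) = x * d(x) / arcsinp(x) -/
noncomputable def phi (p x : ℝ) : ℝ := x * d p x / arcsinp p x

lemma phi_hasDerivAt (hp : 1 < p) {x : ℝ} (hx : x ∈ Set.Ioo (0:ℝ) 1) :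
    HasDerivAt (phi p)
      (((1 * d p x + x * (x ^ (p - 1) * (1 - x ^ p) ^ (-(1 / p) - 1))) * arcsinp p x
        - x * d p x * d p x) / (arcsinp p x) ^ 2) x := by
  have hN : HasDerivAt (fun u => u * d p u)
      (1 * d p x + x * (x ^ (p - 1) * (1 - x ^ p) ^ (-(1 / p) - 1))) x :=
    (hasDerivAt_id x).mul (hasDerivAt_d hp hx)
  exact hN.div (hasDerivAt_arcsinp hp hx) (ne_of_gt (arcsinp_pos hp hx))

lemma phi_deriv_nonneg (hp : 1 < p) {x : ℝ} (hx : x ∈ Set.Ioo (0:ℝ) 1) :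
    0 ≤ ((1 * d p x + x * (x ^ (p - 1) * (1 - x ^ p) ^ (-(1 / p) - 1))) * arcsinp p x
        - x * d p x * d p x) / (arcsinp p x) ^ 2 := by
  have hA : 0 < 1 - x ^ p := one_sub_pos hp hx.1.le hx.2
  apply div_nonneg _ (sq_nonneg _)
  have key : 1 * d p x + x * (x ^ (p - 1) * (1 - x ^ p) ^ (-(1 / p) - 1))
      = (1 - x ^ p) ^ (-(1 / p) - 1) := by
    have e2 := x_mul_rpow (p := p) hx.1
    have e3 : d p x = (1 - x ^ p) * (1 - x ^ p) ^ (-(1 / p) - 1) := by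
      have h5 : (1 - x ^ p) * (1 - x ^ p) ^ (-(1 / p) - 1)
          = (1 - x ^ p) ^ (1:ℝ) * (1 - x ^ p) ^ (-(1 / p) - 1) := by rw [Real.rpow_one]
      rw [d, h5, ← Real.rpow_add hA]
      congr 1
      ring
    rw [e3]
    nlinarith [e2, Real.rpow_pos_of_pos hA (-(1 / p) - 1)]
  rw [key]
  have e4 : (1 - x ^ p) ^ (-(1 / p) - 1) * (x * (1 - x ^ p) ^ (1 - 1 / p))
      = x * (d p x * d p x) := by
    have h6 : (1 - x ^ p) ^ (-(1 / p) - 1) * (1 - x ^ p) ^ (1 - 1 / p)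
        = (1 - x ^ p) ^ (-(1 / p)) * (1 - x ^ p) ^ (-(1 / p)) := by
      rw [← Real.rpow_add hA, ← Real.rpow_add hA]
      congr 1
      ring
    rw [d]
    linear_combination x * h6
  have hB : 0 < (1 - x ^ p) ^ (-(1 / p) - 1) := Real.rpow_pos_of_pos hA _
  have hle := le_arcsinp hp hx
  nlinarith [mul_le_mul_of_nonneg_left hle hB.le]

lemma phi_mono (hp : 1 < p) : MonotoneOn (phi p) (Set.Ioo (0:ℝ) 1) := by
  apply monotoneOn_of_deriv_nonneg (convex_Ioo 0 1)
  · exact fun u hu => (phi_hasDerivAt hp hu).continuousAt.continuousWithinAt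
  · rw [interior_Ioo]
    exact fun u hu => (phi_hasDerivAt hp hu).differentiableAt.differentiableWithinAt
  · rw [interior_Ioo]
    intro u hu
    rw [(phi_hasDerivAt hp hu).deriv]
    exact phi_deriv_nonneg hp hu

/-- psi(x) = arcsinp(x)/x -/
noncomputable def psi (p x : ℝ) : ℝ := arcsinp p x / x

lemma psi_hasDerivAt (hp : 1 < p) {x : ℝ} (hx : x ∈ Set.Ioo (0:ℝ) 1) :
    HasDerivAt (psi p) ((d p x * x - arcsinp p x * 1) / x ^ 2) x :=
  (hasDerivAt_arcsinp hp hx).div (hasDerivAt_id x) (ne_of_gt hx.1)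

lemma psi_mono (hp : 1 < p) : MonotoneOn (psi p) (Set.Ioo (0:ℝ) 1) := by
  apply monotoneOn_of_deriv_nonneg (convex_Ioo 0 1)
  · exact fun u hu => (psi_hasDerivAt hp hu).continuousAt.continuousWithinAt
  · rw [interior_Ioo]
    exact fun u hu => (psi_hasDerivAt hp hu).differentiableAt.differentiableWithinAt
  · rw [interior_Ioo]
    intro u hu
    rw [(psi_hasDerivAt hp hu).deriv]
    apply div_nonneg _ (sq_nonneg _)
    have := arcsinp_le hp hu
    nlinarith

lemma phi_pos (hp : 1 < p) {x : ℝ} (hx : x ∈ Set.Ioo (0:ℝ) 1) : 0 < phi p x :=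
  div_pos (mul_pos hx.1 (d_pos hp hx.1.le hx.2)) (arcsinp_pos hp hx)

lemma psi_pos (hp : 1 < p) {x : ℝ} (hx : x ∈ Set.Ioo (0:ℝ) 1) : 0 < psi p x :=
  div_pos (arcsinp_pos hp hx) hx.1

lemma mem_Ioo_rpow {x c : ℝ} (hx : x ∈ Set.Ioo (0:ℝ) 1) (hc : 0 < c) :
    x ^ c ∈ Set.Ioo (0:ℝ) 1 :=
  ⟨Real.rpow_pos_of_pos hx.1 _, Real.rpow_lt_one hx.1.le hx.2 hc⟩

lemma g_hasDerivAt (hp : 1 < p) {t : ℝ} (ht : 0 < t) {x : ℝ} (hx : x ∈ Set.Ioo (0:ℝ) 1) :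
    HasDerivAt (fun x : ℝ => arcsinp p (x ^ (1 / t)) ^ t)
      (psi p (x ^ (1 / t)) ^ t * phi p (x ^ (1 / t))) x := by
  have hu : x ^ (1 / t) ∈ Set.Ioo (0:ℝ) 1 := mem_Ioo_rpow hx (by positivity)
  have hfu : 0 < arcsinp p (x ^ (1 / t)) := arcsinp_pos hp hu
  have hinner : HasDerivAt (fun x : ℝ => x ^ (1 / t)) ((1 / t) * x ^ (1 / t - 1)) x :=
    Real.hasDerivAt_rpow_const (Or.inl (ne_of_gt hx.1))
  have hcomp1 : HasDerivAt (fun x : ℝ => arcsinp p (x ^ (1 / t)))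
      (d p (x ^ (1 / t)) * ((1 / t) * x ^ (1 / t - 1))) x :=
    (hasDerivAt_arcsinp hp hu).comp (h := fun x : ℝ => x ^ (1 / t)) x hinner
  have houter : HasDerivAt (fun x : ℝ => arcsinp p (x ^ (1 / t)) ^ t)
      ((d p (x ^ (1 / t)) * ((1 / t) * x ^ (1 / t - 1))) * t
        * (arcsinp p (x ^ (1 / t))) ^ (t - 1)) x :=
    hcomp1.rpow_const (Or.inl (ne_of_gt hfu))
  convert houter using 1
  have e2 : (x ^ (1 / t)) ^ t = x := by
    rw [one_div, Real.rpow_inv_rpow hx.1.le (ne_of_gt ht)]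
  have e3 : arcsinp p (x ^ (1 / t)) ^ t
      = arcsinp p (x ^ (1 / t)) ^ (t - 1) * arcsinp p (x ^ (1 / t)) := by
    have h := Real.rpow_add hfu (t - 1) 1
    rw [Real.rpow_one, show t - 1 + 1 = t by ring] at h
    exact h
  have e4 : x ^ (1 / t - 1) = x ^ (1 / t) / x := by
    rw [Real.rpow_sub hx.1, Real.rpow_one]
  have ht' : t ≠ 0 := ne_of_gt ht
  have hfu' : arcsinp p (x ^ (1 / t)) ≠ 0 := ne_of_gt hfu
  have hx' : x ≠ 0 := ne_of_gt hx.1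
  rw [phi, psi, Real.div_rpow hfu.le hu.1.le, e2, e3, e4]
  field_simp

lemma g_convexOn (hp : 1 < p) {t : ℝ} (ht : 0 < t) :
    ConvexOn ℝ (Set.Ioo (0:ℝ) 1) (fun x : ℝ => arcsinp p (x ^ (1 / t)) ^ t) := by
  apply MonotoneOn.convexOn_of_deriv (convex_Ioo 0 1)
  · exact fun u hu => (g_hasDerivAt hp ht hu).continuousAt.continuousWithinAt
  · rw [interior_Ioo]
    exact fun u hu => (g_hasDerivAt hp ht hu).differentiableAt.differentiableWithinAt
  · rw [interior_Ioo]
    intro a ha b hb hab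
    rw [(g_hasDerivAt hp ht ha).deriv, (g_hasDerivAt hp ht hb).deriv]
    have hua : a ^ (1 / t) ∈ Set.Ioo (0:ℝ) 1 := mem_Ioo_rpow ha (by positivity)
    have hub : b ^ (1 / t) ∈ Set.Ioo (0:ℝ) 1 := mem_Ioo_rpow hb (by positivity)
    have huab : a ^ (1 / t) ≤ b ^ (1 / t) :=
      Real.rpow_le_rpow ha.1.le hab (by positivity)
    have h1 : psi p (a ^ (1 / t)) ^ t ≤ psi p (b ^ (1 / t)) ^ t :=
      Real.rpow_le_rpow (psi_pos hp hua).le (psi_mono hp hua hub huab) ht.le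
    have h2 : phi p (a ^ (1 / t)) ≤ phi p (b ^ (1 / t)) :=
      phi_mono hp hua hub huab
    exact mul_le_mul h1 h2 (phi_pos hp hua).le
      (Real.rpow_nonneg (psi_pos hp hub).le t)

lemma h_hasDerivAt (hp : 1 < p) {u : ℝ} (hu : u < 0) :
    HasDerivAt (fun u : ℝ => Real.log (arcsinp p (Real.exp u))) (phi p (Real.exp u)) u := by
  have he : Real.exp u ∈ Set.Ioo (0:ℝ) 1 := ⟨Real.exp_pos u, Real.exp_lt_one_iff.mpr hu⟩
  have hfu : 0 < arcsinp p (Real.exp u) := arcsinp_pos hp he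
  have h1 : HasDerivAt (fun u : ℝ => arcsinp p (Real.exp u))
      (d p (Real.exp u) * Real.exp u) u :=
    (hasDerivAt_arcsinp hp he).comp (h := Real.exp) u (Real.hasDerivAt_exp u)
  have h2 := (Real.hasDerivAt_log (ne_of_gt hfu)).comp u h1
  refine h2.congr_deriv (Eq.symm ?_)
  rw [phi]
  field_simp

lemma h_convexOn (hp : 1 < p) :
    ConvexOn ℝ (Set.Iio (0:ℝ)) (fun u : ℝ => Real.log (arcsinp p (Real.exp u))) := by
  apply MonotoneOn.convexOn_of_deriv (convex_Iio 0)
  · exact fun u hu => (h_hasDerivAt hp hu).continuousAt.continuousWithinAt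
  · rw [interior_Iio]
    exact fun u hu => (h_hasDerivAt hp hu).differentiableAt.differentiableWithinAt
  · rw [interior_Iio]
    intro a ha b hb hab
    rw [(h_hasDerivAt hp ha).deriv, (h_hasDerivAt hp hb).deriv]
    exact phi_mono hp ⟨Real.exp_pos a, Real.exp_lt_one_iff.mpr ha⟩
      ⟨Real.exp_pos b, Real.exp_lt_one_iff.mpr hb⟩ (Real.exp_le_exp.mpr hab)

end ArcsinpAux

open ArcsinpAux

theorem arcsinp_powerMean_le (p t : ℝ) (hp : 1 < p) (ht : 0 ≤ t)
    (r s : ℝ) (hr : r ∈ Set.Ioo (0:ℝ) 1) (hs : s ∈ Set.Ioo (0:ℝ) 1) :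
    arcsinp p (powerMean t r s) ≤ powerMean t (arcsinp p r) (arcsinp p s) := by
  have hfr : 0 < arcsinp p r := arcsinp_pos hp hr
  have hfs : 0 < arcsinp p s := arcsinp_pos hp hs
  rcases eq_or_lt_of_le ht with h0 | ht'
  · -- t = 0 : geometric mean
    subst h0
    rw [powerMean, if_pos rfl, powerMean, if_pos rfl]
    set a := Real.log r with ha
    set b := Real.log s with hb
    have haI : a ∈ Set.Iio (0:ℝ) := Real.log_neg hr.1 hr.2
    have hbI : b ∈ Set.Iio (0:ℝ) := Real.log_neg hs.1 hs.2
    have hrs : 0 < r * s := mul_pos hr.1 hs.1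
    have hconv := (h_convexOn hp).2 haI hbI (by norm_num : (0:ℝ) ≤ 1/2)
      (by norm_num : (0:ℝ) ≤ 1/2) (by norm_num)
    simp only [smul_eq_mul] at hconv
    have hmid : (1/2) * a + (1/2) * b = Real.log (Real.sqrt (r * s)) := by
      rw [Real.log_sqrt hrs.le, Real.log_mul (ne_of_gt hr.1) (ne_of_gt hs.1)]
      ring
    rw [hmid, Real.exp_log (Real.sqrt_pos.mpr hrs)] at hconv
    rw [ha, Real.exp_log hr.1] at hconv
    rw [hb, Real.exp_log hs.1] at hconv
    have hsqIoo : Real.sqrt (r * s) ∈ Set.Ioo (0:ℝ) 1 := by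
      rw [Real.sqrt_eq_rpow]
      exact mem_Ioo_rpow ⟨hrs, by nlinarith [hr.1, hr.2, hs.1, hs.2]⟩ (by norm_num)
    have hfm : 0 < arcsinp p (Real.sqrt (r * s)) := arcsinp_pos hp hsqIoo
    have hrhs : (1/2) * Real.log (arcsinp p r) + (1/2) * Real.log (arcsinp p s)
        = Real.log (Real.sqrt (arcsinp p r * arcsinp p s)) := by
      rw [Real.log_sqrt (by positivity), Real.log_mul (ne_of_gt hfr) (ne_of_gt hfs)]
      ring
    rw [hrhs] at hconv
    have := Real.exp_le_exp.mpr hconv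
    rwa [Real.exp_log hfm, Real.exp_log (Real.sqrt_pos.mpr (by positivity))] at this
  · -- t > 0
    have tne : t ≠ 0 := ne_of_gt ht'
    rw [powerMean, if_neg tne, powerMean, if_neg tne]
    set a := r ^ t with ha
    set b := s ^ t with hb
    have haI : a ∈ Set.Ioo (0:ℝ) 1 := mem_Ioo_rpow hr ht'
    have hbI : b ∈ Set.Ioo (0:ℝ) 1 := mem_Ioo_rpow hs ht'
    have hmI : (1/2) * a + (1/2) * b ∈ Set.Ioo (0:ℝ) 1 := by
      constructor <;> [nlinarith [haI.1, hbI.1]; nlinarith [haI.2, hbI.2]]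
    have hconv := (g_convexOn hp ht').2 haI hbI (by norm_num : (0:ℝ) ≤ 1/2)
      (by norm_num : (0:ℝ) ≤ 1/2) (by norm_num)
    simp only [smul_eq_mul] at hconv
    have ear : a ^ (1/t) = r := by rw [one_div, ha, Real.rpow_rpow_inv hr.1.le tne]
    have ebs : b ^ (1/t) = s := by rw [one_div, hb, Real.rpow_rpow_inv hs.1.le tne]
    rw [ear, ebs] at hconv
    have hmeq : (1/2) * a + (1/2) * b = (a + b) / 2 := by ring
    rw [hmeq] at hconv hmI
    have hmu : ((a + b) / 2) ^ (1/t) ∈ Set.Ioo (0:ℝ) 1 := mem_Ioo_rpow hmI (by positivity)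
    have hfm : 0 < arcsinp p (((a + b) / 2) ^ (1/t)) := arcsinp_pos hp hmu
    calc arcsinp p (((a + b) / 2) ^ (1/t))
        = ((arcsinp p (((a + b) / 2) ^ (1/t))) ^ t) ^ (1/t) := by
          rw [one_div] at hfm ⊢
          rw [Real.rpow_rpow_inv hfm.le tne]
      _ ≤ ((arcsinp p r ^ t + arcsinp p s ^ t) / 2) ^ (1/t) := by
          apply Real.rpow_le_rpow (Real.rpow_nonneg hfm.le t) _ (by positivity)
          calc arcsinp p (((a + b) / 2) ^ (1/t)) ^ t
              ≤ 1/2 * arcsinp p r ^ t + 1/2 * arcsinp p s ^ t := hconv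
            _ = (arcsinp p r ^ t + arcsinp p s ^ t) / 2 := by ring
end

section
/- For every p > 1, every t ≥ 0, and all r, s ∈ (0,1), one has artanh_p(M_t(r,s)) ≤ M_t(artanh_p(r), artanh_p(s)). -/
open Real Set

open MeasureTheory

lemma artanhp_rep (p x : ℝ) : artanhp p x = ∫ v in (0:ℝ)..1, x * (1 - (x*v) ^ p)⁻¹ := by
  have h := intervalIntegral.smul_integral_comp_mul_left
      (f := fun u => (1 - u ^ p)⁻¹) (a := (0:ℝ)) (b := 1) x
  simp only [mul_zero, mul_one] at h
  rw [artanhp, ← h, intervalIntegral.integral_const_mul, smul_eq_mul]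

lemma denom_pos {p x v : ℝ} (hp : 0 < p) (hx0 : 0 ≤ x) (hx1 : x < 1)
    (hv : v ∈ Icc (0:ℝ) 1) : 0 < 1 - (x*v) ^ p := by
  have h1 : (x*v) ^ p < 1 :=
    Real.rpow_lt_one (mul_nonneg hx0 hv.1)
      (lt_of_le_of_lt (by nlinarith [hv.2, hv.1] : x*v ≤ x) hx1) hp
  linarith

lemma denom_le_one {p x v : ℝ} (hx0 : 0 ≤ x) (hv : v ∈ Icc (0:ℝ) 1) :
    1 - (x*v) ^ p ≤ 1 := by
  have : (0:ℝ) ≤ (x*v) ^ p := Real.rpow_nonneg (mul_nonneg hx0 hv.1) p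
  linarith

lemma cont_den {p x : ℝ} (hp : 0 < p) (hx0 : 0 ≤ x) (hx1 : x < 1) :
    ContinuousOn (fun v => (1 - (x*v) ^ p)⁻¹) (Icc (0:ℝ) 1) := by
  apply ContinuousOn.inv₀
  · exact ((continuous_const.sub ((continuous_const.mul continuous_id).rpow_const
      (fun _ => Or.inr hp.le)))).continuousOn
  · exact fun v hv => (denom_pos hp hx0 hx1 hv).ne'

lemma cont_integrand {p x : ℝ} (hp : 0 < p) (hx0 : 0 ≤ x) (hx1 : x < 1) :
    ContinuousOn (fun v => x * (1 - (x*v) ^ p)⁻¹) (Icc (0:ℝ) 1) :=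
  continuousOn_const.mul (cont_den hp hx0 hx1)

lemma intble {p x : ℝ} (hp : 0 < p) (hx0 : 0 ≤ x) (hx1 : x < 1) :
    IntervalIntegrable (fun v => x * (1 - (x*v) ^ p)⁻¹) volume 0 1 := by
  apply ContinuousOn.intervalIntegrable
  rw [uIcc_of_le (zero_le_one : (0:ℝ) ≤ 1)]
  exact cont_integrand hp hx0 hx1

lemma intble_den {p x : ℝ} (hp : 0 < p) (hx0 : 0 ≤ x) (hx1 : x < 1) :
    IntervalIntegrable (fun v => (1 - (x*v) ^ p)⁻¹) volume 0 1 := by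
  apply ContinuousOn.intervalIntegrable
  rw [uIcc_of_le (zero_le_one : (0:ℝ) ≤ 1)]
  exact cont_den hp hx0 hx1

lemma le_artanhp {p x : ℝ} (hp : 0 < p) (hx0 : 0 < x) (hx1 : x < 1) :
    x ≤ artanhp p x := by
  rw [artanhp_rep]
  have h0 : x = ∫ _ in (0:ℝ)..1, x := by simp
  nth_rewrite 1 [h0]
  apply intervalIntegral.integral_mono_on zero_le_one
    intervalIntegrable_const (intble hp hx0.le hx1)
  intro v hv
  have h1 := denom_pos hp hx0.le hx1 hv
  have h2 := denom_le_one (p := p) hx0.le hv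
  have h3 : 1 ≤ (1 - (x*v) ^ p)⁻¹ := by
    rw [le_inv_comm₀ one_pos h1]
    simpa using h2
  nlinarith

lemma artanhp_pos {p x : ℝ} (hp : 0 < p) (hx0 : 0 < x) (hx1 : x < 1) :
    0 < artanhp p x := lt_of_lt_of_le hx0 (le_artanhp hp hx0 hx1)

lemma artanhp_div_rep {p x : ℝ} (hx : x ≠ 0) :
    artanhp p x / x = ∫ v in (0:ℝ)..1, (1 - (x*v) ^ p)⁻¹ := by
  rw [artanhp_rep, intervalIntegral.integral_const_mul, mul_div_cancel_left₀ _ hx]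

lemma artanhp_ratio_mono {p x y : ℝ} (hp : 0 < p) (hx0 : 0 < x) (hxy : x ≤ y)
    (hy1 : y < 1) : artanhp p x / x ≤ artanhp p y / y := by
  have hy0 : 0 < y := lt_of_lt_of_le hx0 hxy
  rw [artanhp_div_rep hx0.ne', artanhp_div_rep hy0.ne']
  apply intervalIntegral.integral_mono_on zero_le_one
  · exact intble_den hp hx0.le (lt_of_le_of_lt hxy hy1)
  · exact intble_den hp hy0.le hy1
  · intro v hv
    have h1 := denom_pos hp hy0.le hy1 hv
    have h2 : (x*v) ^ p ≤ (y*v) ^ p :=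
      Real.rpow_le_rpow (mul_nonneg hx0.le hv.1) (mul_le_mul_of_nonneg_right hxy hv.1) hp.le
    exact inv_anti₀ h1 (by linarith)

lemma one_le_artanhp_div {p x : ℝ} (hp : 0 < p) (hx0 : 0 < x) (hx1 : x < 1) :
    1 ≤ artanhp p x / x :=
  (one_le_div hx0).2 (le_artanhp hp hx0 hx1)

lemma artanhp_hasDerivAt {p x : ℝ} (hp : 0 < p) (hx0 : 0 < x) (hx1 : x < 1) :
    HasDerivAt (artanhp p) (1 - x ^ p)⁻¹ x := by
  have hopen : IsOpen (Ioo (-1:ℝ) 1) := isOpen_Ioo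
  have hmem : x ∈ Ioo (-1:ℝ) 1 := ⟨by linarith, hx1⟩
  have hcont : ContinuousOn (fun u : ℝ => (1 - u ^ p)⁻¹) (Ioo (-1:ℝ) 1) := by
    apply ContinuousOn.inv₀
    · exact (continuous_const.sub (continuous_id.rpow_const
        (fun _ => Or.inr hp.le))).continuousOn
    · intro u hu
      have : |u ^ p| < 1 := by
        calc |u ^ p| ≤ |u| ^ p := Real.abs_rpow_le_abs_rpow u p
        _ < 1 := Real.rpow_lt_one (abs_nonneg u) (abs_lt.2 ⟨hu.1, hu.2⟩) hp
      have := abs_lt.1 this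
      intro h; linarith [this.1, this.2]
  have hint : IntervalIntegrable (fun u : ℝ => (1 - u ^ p)⁻¹) volume 0 x := by
    apply ContinuousOn.intervalIntegrable
    apply hcont.mono
    rw [uIcc_of_le hx0.le]
    intro u hu; exact ⟨by linarith [hu.1], lt_of_le_of_lt hu.2 hx1⟩
  have hmeas := hcont.stronglyMeasurableAtFilter (μ := volume) hopen x hmem
  have := intervalIntegral.integral_hasDerivAt_right hint hmeas (hcont.continuousAt
    (hopen.mem_nhds hmem))
  exact this

-- antitone of x ↦ x^(-t) on positives
lemma rpow_neg_anti {t x y : ℝ} (ht : 0 ≤ t) (hx : 0 < x) (hxy : x ≤ y) :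
    y ^ (-t) ≤ x ^ (-t) := by
  rw [Real.rpow_neg (by linarith), Real.rpow_neg hx.le]
  exact inv_anti₀ (Real.rpow_pos_of_pos hx t) (Real.rpow_le_rpow hx.le hxy ht)

-- AM-GM : x^(a) * y^(a) ≤ (x^(2a) + y^(2a))/2  for x,y > 0
lemma rpow_amgm {a x y : ℝ} (hx : 0 < x) (hy : 0 < y) :
    x ^ a * y ^ a ≤ (x ^ (2*a) + y ^ (2*a)) / 2 := by
  have hx2 : x ^ (2*a) = x ^ a * x ^ a := by
    rw [← Real.rpow_add hx]; ring_nf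
  have hy2 : y ^ (2*a) = y ^ a * y ^ a := by
    rw [← Real.rpow_add hy]; ring_nf
  nlinarith [sq_nonneg (x ^ a - y ^ a)]

-- midpoint convexity of x ↦ x^(-t)
lemma mid_rpow_neg {t x y : ℝ} (ht : 0 ≤ t) (hx : 0 < x) (hy : 0 < y) :
    ((x + y)/2) ^ (-t) ≤ (x ^ (-t) + y ^ (-t)) / 2 := by
  have hgm : x ^ (1/2:ℝ) * y ^ (1/2:ℝ) ≤ (x + y)/2 := by
    have := rpow_amgm (a := (1/2:ℝ)) hx hy
    norm_num at this
    simpa [Real.rpow_one] using this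
  have hgmpos : 0 < x ^ (1/2:ℝ) * y ^ (1/2:ℝ) :=
    mul_pos (Real.rpow_pos_of_pos hx _) (Real.rpow_pos_of_pos hy _)
  calc ((x + y)/2) ^ (-t) ≤ (x ^ (1/2:ℝ) * y ^ (1/2:ℝ)) ^ (-t) :=
        rpow_neg_anti ht hgmpos hgm
    _ = x ^ (-t/2) * y ^ (-t/2) := by
        rw [Real.mul_rpow (Real.rpow_pos_of_pos hx _).le (Real.rpow_pos_of_pos hy _).le,
          ← Real.rpow_mul hx.le, ← Real.rpow_mul hy.le]
        norm_num
        ring_nf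
    _ ≤ (x ^ (-t) + y ^ (-t)) / 2 := by
        have := rpow_amgm (a := (-t/2)) hx hy
        have h2 : 2 * (-t/2) = -t := by ring
        rwa [h2] at this

-- two-term Hölder
lemma holder2 {θ A B C D : ℝ} (hθ : 0 < θ) (hθ1 : θ < 1)
    (hA : 0 ≤ A) (hB : 0 ≤ B) (hC : 0 ≤ C) (hD : 0 ≤ D) :
    A ^ θ * B ^ (1-θ) + C ^ θ * D ^ (1-θ) ≤ (A+C) ^ θ * (B+D) ^ (1-θ) := by
  rcases eq_or_lt_of_le (by linarith : (0:ℝ) ≤ A + C) with hS | hS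
  · have hA0 : A = 0 := by linarith
    have hC0 : C = 0 := by linarith
    simp [hA0, hC0, Real.zero_rpow hθ.ne']
  rcases eq_or_lt_of_le (by linarith : (0:ℝ) ≤ B + D) with hT | hT
  · have hB0 : B = 0 := by linarith
    have hD0 : D = 0 := by linarith
    simp [hB0, hD0, Real.zero_rpow (by linarith : (1-θ) ≠ 0)]
  have key : ∀ a b : ℝ, 0 ≤ a → 0 ≤ b →
      a ^ θ * b ^ (1-θ) ≤ (A+C) ^ θ * (B+D) ^ (1-θ) * (θ * (a/(A+C)) + (1-θ) * (b/(B+D))) := by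
    intro a b ha hb
    have h1 : a ^ θ * b ^ (1-θ) = (A+C) ^ θ * (B+D) ^ (1-θ) * ((a/(A+C)) ^ θ * (b/(B+D)) ^ (1-θ)) := by
      rw [Real.div_rpow ha hS.le, Real.div_rpow hb hT.le]
      field_simp
    rw [h1]
    apply mul_le_mul_of_nonneg_left _ (by positivity)
    exact Real.geom_mean_le_arith_mean2_weighted hθ.le (by linarith) (by positivity)
      (by positivity) (by ring)
  calc A ^ θ * B ^ (1-θ) + C ^ θ * D ^ (1-θ)
      ≤ (A+C) ^ θ * (B+D) ^ (1-θ) * (θ * (A/(A+C)) + (1-θ) * (B/(B+D)))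
        + (A+C) ^ θ * (B+D) ^ (1-θ) * (θ * (C/(A+C)) + (1-θ) * (D/(B+D))) :=
        add_le_add (key A B hA hB) (key C D hC hD)
    _ = (A+C) ^ θ * (B+D) ^ (1-θ) := by
        field_simp
        ring

lemma star_aux {p t c a b : ℝ} (hp : 1 < p) (ht : 0 < t) (htp : t ≤ p)
    (hc0 : 0 ≤ c) (hc1 : c ≤ 1) (ha : a ∈ Ioo (0:ℝ) 1) (hb : b ∈ Ioo (0:ℝ) 1)
    (hab : a ≤ b) :
    ((a+b)/2) * (1 - c * ((a+b)/2) ^ (p/t)) ^ (-t) ≤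
      (a * (1 - c * a ^ (p/t)) ^ (-t) + b * (1 - c * b ^ (p/t)) ^ (-t)) / 2 := by
  set q := p/t with hq_def
  have hq : 1 ≤ q := (one_le_div ht).2 htp
  have hq0 : 0 < q := by linarith
  have haq1 : a ^ q < 1 := Real.rpow_lt_one ha.1.le ha.2 hq0
  have hbq1 : b ^ q < 1 := Real.rpow_lt_one hb.1.le hb.2 hq0
  have haq0 : 0 ≤ a ^ q := Real.rpow_nonneg ha.1.le q
  have hbq0 : 0 ≤ b ^ q := Real.rpow_nonneg hb.1.le q
  have hua : 0 < 1 - c * a ^ q := by nlinarith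
  have hub : 0 < 1 - c * b ^ q := by nlinarith
  have habq : a ^ q ≤ b ^ q := Real.rpow_le_rpow ha.1.le hab hq0.le
  have huab : 1 - c * b ^ q ≤ 1 - c * a ^ q := by nlinarith
  set μ := (a+b)/2 with hμ_def
  have hμ0 : 0 < μ := by simp only [hμ_def]; linarith [ha.1, hb.1]
  -- convexity of rpow q
  have hμq : μ ^ q ≤ (a ^ q + b ^ q)/2 := by
    have h := (convexOn_rpow hq).2 (mem_Ici.2 ha.1.le) (mem_Ici.2 hb.1.le)
      (by norm_num : (0:ℝ) ≤ 1/2) (by norm_num : (0:ℝ) ≤ 1/2) (by norm_num)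
    simp only [smul_eq_mul] at h
    calc μ ^ q = (1/2 * a + 1/2 * b) ^ q := by rw [hμ_def]; ring_nf
      _ ≤ 1/2 * a ^ q + 1/2 * b ^ q := h
      _ = (a ^ q + b ^ q)/2 := by ring
  have huμ : (1 - c * a ^ q + (1 - c * b ^ q))/2 ≤ 1 - c * μ ^ q := by nlinarith
  have huμ2 : 0 < (1 - c * a ^ q + (1 - c * b ^ q))/2 := by linarith
  set A := (1 - c * a ^ q) ^ (-t) with hA_def
  set B := (1 - c * b ^ q) ^ (-t) with hB_def
  have hAB : A ≤ B := rpow_neg_anti ht.le hub huab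
  have hA0 : 0 < A := Real.rpow_pos_of_pos hua _
  calc μ * (1 - c * μ ^ q) ^ (-t)
      ≤ μ * ((1 - c * a ^ q + (1 - c * b ^ q))/2) ^ (-t) :=
        mul_le_mul_of_nonneg_left (rpow_neg_anti ht.le huμ2 huμ) hμ0.le
    _ ≤ μ * ((A + B)/2) := by
        apply mul_le_mul_of_nonneg_left _ hμ0.le
        exact mid_rpow_neg ht.le hua hub
    _ ≤ (a * A + b * B)/2 := by
        simp only [hμ_def]
        nlinarith [mul_nonneg (sub_nonneg.2 hab) (sub_nonneg.2 hAB)]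

lemma starIneq {p t c a b : ℝ} (hp : 1 < p) (ht : 0 < t) (htp : t ≤ p)
    (hc0 : 0 ≤ c) (hc1 : c ≤ 1) (ha : a ∈ Ioo (0:ℝ) 1) (hb : b ∈ Ioo (0:ℝ) 1) :
    ((a+b)/2) * (1 - c * ((a+b)/2) ^ (p/t)) ^ (-t) ≤
      (a * (1 - c * a ^ (p/t)) ^ (-t) + b * (1 - c * b ^ (p/t)) ^ (-t)) / 2 := by
  rcases le_total a b with h | h
  · exact star_aux hp ht htp hc0 hc1 ha hb h
  · have := star_aux hp ht htp hc0 hc1 hb ha h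
    rw [add_comm b a] at this
    linarith

lemma convexH {p t : ℝ} (hp : 1 < p) (ht : 1 ≤ t) :
    ConvexOn ℝ (Ioo (0:ℝ) 1) (fun a => (artanhp p (a ^ (1/t))) ^ t) := by
  have hp0 : 0 < p := by linarith
  have ht0 : 0 < t := by linarith
  set D : ℝ → ℝ := fun a =>
    (artanhp p (a ^ (1/t)) / a ^ (1/t)) ^ (t-1) * (1 - (a ^ (1/t)) ^ p)⁻¹ with hD_def
  have hx : ∀ a ∈ Ioo (0:ℝ) 1, a ^ (1/t) ∈ Ioo (0:ℝ) 1 := fun a ha =>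
    ⟨Real.rpow_pos_of_pos ha.1 _, Real.rpow_lt_one ha.1.le ha.2 (by positivity)⟩
  have hasD : ∀ a ∈ Ioo (0:ℝ) 1,
      HasDerivAt (fun a => (artanhp p (a ^ (1/t))) ^ t) (D a) a := by
    intro a ha
    set x := a ^ (1/t) with hx_def
    obtain ⟨hx0, hx1⟩ := hx a ha
    have h1 : HasDerivAt (fun a : ℝ => a ^ (1/t)) ((1/t) * a ^ (1/t-1)) a :=
      Real.hasDerivAt_rpow_const (Or.inl ha.1.ne')
    have h2 : HasDerivAt (artanhp p) ((1 - x ^ p)⁻¹) x := artanhp_hasDerivAt hp0 hx0 hx1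
    have hfx : 0 < artanhp p x := artanhp_pos hp0 hx0 hx1
    have h3 : HasDerivAt (fun y : ℝ => y ^ t) (t * (artanhp p x) ^ (t-1)) (artanhp p x) :=
      Real.hasDerivAt_rpow_const (Or.inl hfx.ne')
    have hcomp := (h3.comp x h2).comp a h1
    have heq : t * (artanhp p x) ^ (t-1) * (1 - x ^ p)⁻¹ * ((1/t) * a ^ (1/t-1)) = D a := by
      have hax : a ^ (1/t-1) = x ^ (1-t) := by
        rw [hx_def, ← Real.rpow_mul ha.1.le]
        congr 1
        field_simp
      have hdiv : (artanhp p x / x) ^ (t-1) = (artanhp p x) ^ (t-1) * x ^ (1-t) := by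
        rw [Real.div_rpow hfx.le hx0.le]
        rw [div_eq_mul_inv, ← Real.rpow_neg hx0.le]
        congr 2
        ring
      rw [hD_def]
      simp only [← hx_def, hdiv, hax]
      have h4 : t * (1/t) = 1 := by field_simp
      calc t * artanhp p x ^ (t-1) * (1 - x ^ p)⁻¹ * (1/t * x ^ (1-t))
          = (t * (1/t)) * (artanhp p x ^ (t-1) * x ^ (1-t) * (1 - x ^ p)⁻¹) := by ring
        _ = artanhp p x ^ (t-1) * x ^ (1-t) * (1 - x ^ p)⁻¹ := by rw [h4, one_mul]
    rw [heq] at hcomp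
    exact hcomp.congr_of_eventuallyEq (by filter_upwards with b; simp [Function.comp])
  have hmono : MonotoneOn D (Ioo (0:ℝ) 1) := by
    intro a₁ ha₁ a₂ ha₂ h12
    obtain ⟨hx₁0, hx₁1⟩ := hx a₁ ha₁
    obtain ⟨hx₂0, hx₂1⟩ := hx a₂ ha₂
    have hx12 : a₁ ^ (1/t) ≤ a₂ ^ (1/t) := Real.rpow_le_rpow ha₁.1.le h12 (by positivity)
    have hr1 : 1 ≤ artanhp p (a₁ ^ (1/t)) / a₁ ^ (1/t) := one_le_artanhp_div hp0 hx₁0 hx₁1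
    have hr12 : artanhp p (a₁ ^ (1/t)) / a₁ ^ (1/t) ≤ artanhp p (a₂ ^ (1/t)) / a₂ ^ (1/t) :=
      artanhp_ratio_mono hp0 hx₁0 hx12 hx₂1
    have hq1 : (artanhp p (a₁ ^ (1/t)) / a₁ ^ (1/t)) ^ (t-1)
        ≤ (artanhp p (a₂ ^ (1/t)) / a₂ ^ (1/t)) ^ (t-1) :=
      Real.rpow_le_rpow (by linarith) hr12 (by linarith)
    have hd₁ : 0 < 1 - (a₁ ^ (1/t)) ^ p := by
      have : (a₁ ^ (1/t)) ^ p < 1 := Real.rpow_lt_one hx₁0.le hx₁1 hp0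
      linarith
    have hd₂ : 0 < 1 - (a₂ ^ (1/t)) ^ p := by
      have : (a₂ ^ (1/t)) ^ p < 1 := Real.rpow_lt_one hx₂0.le hx₂1 hp0
      linarith
    have hd12 : (1 - (a₁ ^ (1/t)) ^ p)⁻¹ ≤ (1 - (a₂ ^ (1/t)) ^ p)⁻¹ := by
      apply inv_anti₀ hd₂
      have : (a₁ ^ (1/t)) ^ p ≤ (a₂ ^ (1/t)) ^ p :=
        Real.rpow_le_rpow hx₁0.le hx12 hp0.le
      linarith
    exact mul_le_mul hq1 hd12 (inv_nonneg.2 hd₁.le)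
      (Real.rpow_nonneg (by linarith [one_le_artanhp_div hp0 hx₂0 hx₂1]) _)
  apply MonotoneOn.convexOn_of_deriv (convex_Ioo 0 1)
  · exact fun a ha => ((hasD a ha).continuousAt).continuousWithinAt
  · rw [interior_Ioo]
    exact fun a ha => (hasD a ha).differentiableAt.differentiableWithinAt
  · rw [interior_Ioo]
    intro a₁ ha₁ a₂ ha₂ h12
    rw [(hasD a₁ ha₁).deriv, (hasD a₂ ha₂).deriv]
    exact hmono ha₁ ha₂ h12

lemma amgm_w {z u w : ℝ} (hz : 0 < z) : u*w ≤ z/2*u^2 + z⁻¹/2*w^2 := by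
  rw [← mul_le_mul_iff_right₀ hz]
  have h : z*(z/2*u^2 + z⁻¹/2*w^2) = z^2/2*u^2 + 1/2*w^2 := by
    field_simp
  rw [h]
  nlinarith [sq_nonneg (z*u - w)]


lemma pow_t_form {p t x v : ℝ} (hp0 : 0 < p) (ht0 : 0 < t) (hx0 : 0 < x) (hx1 : x < 1)
    (hv : v ∈ Icc (0:ℝ) 1) :
    (x * (1 - (x*v) ^ p)⁻¹) ^ t = (x ^ t) * (1 - v ^ p * (x ^ t) ^ (p/t)) ^ (-t) := by
  have hd := denom_pos hp0 hx0.le hx1 hv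
  have h1 : (x ^ t) ^ (p/t) = x ^ p := by
    rw [← Real.rpow_mul hx0.le]
    congr 1
    field_simp
  have h2 : (x*v) ^ p = v ^ p * x ^ p := by
    rw [Real.mul_rpow hx0.le hv.1, mul_comm]
  rw [Real.mul_rpow hx0.le (inv_nonneg.2 hd.le), Real.inv_rpow hd.le, ← Real.rpow_neg hd.le,
    h1, ← h2]


set_option maxHeartbeats 1600000 in
theorem artanhp_powerMean_le (p t : ℝ) (hp : 1 < p) (ht : 0 ≤ t)
    (r s : ℝ) (hr : r ∈ Set.Ioo (0:ℝ) 1) (hs : s ∈ Set.Ioo (0:ℝ) 1) :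
    artanhp p (powerMean t r s) ≤ powerMean t (artanhp p r) (artanhp p s) := by
  rcases eq_or_lt_of_le ht with ht0 | ht0
  · -- t = 0
    subst ht0
    have hp0 : 0 < p := by linarith
    set m := Real.sqrt (r*s) with hm_def
    have hm0 : 0 < m := Real.sqrt_pos.2 (mul_pos hr.1 hs.1)
    have hm1 : m < 1 := by
      rw [hm_def, show (1:ℝ) = Real.sqrt 1 from (Real.sqrt_one).symm]
      exact Real.sqrt_lt_sqrt (mul_nonneg hr.1.le hs.1.le) (by nlinarith [hr.1, hr.2, hs.1, hs.2])
    have hG := artanhp_pos hp0 hr.1 hr.2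
    have hH := artanhp_pos hp0 hs.1 hs.2
    set G := artanhp p r
    set H := artanhp p s
    set C1 := Real.sqrt (H/G) / 2 with hC1_def
    set C2 := Real.sqrt (G/H) / 2 with hC2_def
    have hpm : powerMean 0 r s = m := if_pos rfl
    rw [hpm]
    -- pointwise bound
    have point : ∀ v ∈ Icc (0:ℝ) 1,
        m * (1 - (m*v) ^ p)⁻¹ ≤ C1 * (r * (1 - (r*v) ^ p)⁻¹) + C2 * (s * (1 - (s*v) ^ p)⁻¹) := by
      intro v hv
      have hdr := denom_pos hp0 hr.1.le hr.2 hv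
      have hds := denom_pos hp0 hs.1.le hs.2 hv
      have hdm := denom_pos hp0 hm0.le hm1 hv
      set X := (r*v) ^ p with hX_def
      set Y := (s*v) ^ p with hY_def
      set E := (m*v) ^ p with hE_def
      have hX0 : 0 ≤ X := Real.rpow_nonneg (by nlinarith [hr.1, hv.1] : (0:ℝ) ≤ r*v) p
      have hY0 : 0 ≤ Y := Real.rpow_nonneg (by nlinarith [hs.1, hv.1] : (0:ℝ) ≤ s*v) p
      have hE0 : 0 ≤ E := Real.rpow_nonneg (by nlinarith [hm0, hv.1] : (0:ℝ) ≤ m*v) p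
      have hEE : E * E = X * Y := by
        rw [hX_def, hY_def, hE_def, ← Real.mul_rpow (by nlinarith [hm0, hv.1] : (0:ℝ) ≤ m*v)
          (by nlinarith [hm0, hv.1] : (0:ℝ) ≤ m*v),
          ← Real.mul_rpow (by nlinarith [hr.1, hv.1] : (0:ℝ) ≤ r*v)
          (by nlinarith [hs.1, hv.1] : (0:ℝ) ≤ s*v)]
        congr 1
        have h : m * m = r * s := Real.mul_self_sqrt (mul_nonneg hr.1.le hs.1.le)
        linear_combination v^2 * h
      have hE' : E = Real.sqrt (X*Y) := by rw [← hEE, Real.sqrt_mul_self hE0]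
      have h2E : 2*E ≤ X + Y := by
        have h1 : X*Y ≤ ((X+Y)/2)^2 := by nlinarith [sq_nonneg (X - Y)]
        have h2 : Real.sqrt (X*Y) ≤ (X+Y)/2 := by
          calc Real.sqrt (X*Y) ≤ Real.sqrt (((X+Y)/2)^2) := Real.sqrt_le_sqrt h1
            _ = (X+Y)/2 := Real.sqrt_sq (by linarith)
        linarith [hE' ▸ h2]
      -- (1-X)(1-Y) ≤ (1-E)^2
      have hprod : (1 - X) * (1 - Y) ≤ (1 - E)^2 := by nlinarith
      have hprodpos : 0 < (1 - X) * (1 - Y) := by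
        rw [hX_def, hY_def]; exact mul_pos hdr hds
      have hsq : Real.sqrt ((1-X)*(1-Y)) ≤ 1 - E := by
        calc Real.sqrt ((1-X)*(1-Y)) ≤ Real.sqrt ((1-E)^2) := Real.sqrt_le_sqrt hprod
          _ = 1 - E := Real.sqrt_sq (by linarith [hdm])
      -- step i : m * (1-E)⁻¹ ≤ sqrt (gv * hv)
      have hstepi : m * (1 - E)⁻¹ ≤ Real.sqrt ((r * (1-X)⁻¹) * (s * (1-Y)⁻¹)) := by
        have h1 : Real.sqrt ((r * (1-X)⁻¹) * (s * (1-Y)⁻¹))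
            = m * (Real.sqrt ((1-X)*(1-Y)))⁻¹ := by
          rw [show (r * (1-X)⁻¹) * (s * (1-Y)⁻¹) = (r*s) * ((1-X)*(1-Y))⁻¹ by
              rw [mul_inv]; ring,
            Real.sqrt_mul (by nlinarith [hr.1, hs.1] : (0:ℝ) ≤ r*s), Real.sqrt_inv, hm_def]
        rw [h1]
        apply mul_le_mul_of_nonneg_left _ hm0.le
        exact inv_anti₀ (Real.sqrt_pos.2 hprodpos) hsq
      -- step ii : sqrt (A*B) ≤ C1 A + C2 B
      have hstepii : ∀ A B : ℝ, 0 ≤ A → 0 ≤ B → Real.sqrt (A*B) ≤ C1 * A + C2 * B := by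
        intro A B hA hB
        have hz : 0 < Real.sqrt (H/G) := Real.sqrt_pos.2 (div_pos hH hG)
        have hz2 : Real.sqrt (G/H) = (Real.sqrt (H/G))⁻¹ := by
          rw [← Real.sqrt_inv, inv_div]
        calc Real.sqrt (A*B) = Real.sqrt A * Real.sqrt B := Real.sqrt_mul hA B
          _ ≤ Real.sqrt (H/G)/2 * Real.sqrt A ^ 2 + (Real.sqrt (H/G))⁻¹/2 * Real.sqrt B ^ 2 :=
              amgm_w hz
          _ = C1 * A + C2 * B := by
              rw [Real.sq_sqrt hA, Real.sq_sqrt hB, hC1_def, hC2_def, hz2]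
      calc m * (1 - E)⁻¹ ≤ Real.sqrt ((r * (1-X)⁻¹) * (s * (1-Y)⁻¹)) := hstepi
        _ ≤ C1 * (r * (1-X)⁻¹) + C2 * (s * (1-Y)⁻¹) := by
            exact hstepii _ _ (mul_nonneg hr.1.le (inv_nonneg.2 hdr.le))
              (mul_nonneg hs.1.le (inv_nonneg.2 hds.le))
    -- integrate
    have hint : artanhp p m ≤ C1 * G + C2 * H := by
      rw [artanhp_rep]
      have e1 : (∫ v in (0:ℝ)..1, C1 * (r * (1 - (r*v) ^ p)⁻¹)) = C1 * G := by
        rw [intervalIntegral.integral_const_mul]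
        rw [← artanhp_rep]
      have e2 : (∫ v in (0:ℝ)..1, C2 * (s * (1 - (s*v) ^ p)⁻¹)) = C2 * H := by
        rw [intervalIntegral.integral_const_mul]
        rw [← artanhp_rep]
      have heq : C1 * G + C2 * H
          = ∫ v in (0:ℝ)..1, (C1 * (r * (1 - (r*v) ^ p)⁻¹) + C2 * (s * (1 - (s*v) ^ p)⁻¹)) := by
        rw [intervalIntegral.integral_add ((intble hp0 hr.1.le hr.2).const_mul C1)
          ((intble hp0 hs.1.le hs.2).const_mul C2), e1, e2]
      rw [heq]
      apply intervalIntegral.integral_mono_on zero_le_one (intble hp0 hm0.le hm1)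
        (((intble hp0 hr.1.le hr.2).const_mul C1).add ((intble hp0 hs.1.le hs.2).const_mul C2))
      exact point
    -- final algebra
    have hfin : C1 * G + C2 * H = Real.sqrt (G * H) := by
      rw [hC1_def, hC2_def]
      have h1 : Real.sqrt (H/G) * G = Real.sqrt (G*H) := by
        calc Real.sqrt (H/G) * G = Real.sqrt (H/G) * Real.sqrt (G*G) := by
              rw [Real.sqrt_mul_self hG.le]
          _ = Real.sqrt (H/G*(G*G)) := (Real.sqrt_mul (div_nonneg hH.le hG.le) _).symm
          _ = Real.sqrt (G*H) := by
              congr 1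
              field_simp
      have h2 : Real.sqrt (G/H) * H = Real.sqrt (G*H) := by
        calc Real.sqrt (G/H) * H = Real.sqrt (G/H) * Real.sqrt (H*H) := by
              rw [Real.sqrt_mul_self hH.le]
          _ = Real.sqrt (G/H*(H*H)) := (Real.sqrt_mul (div_nonneg hG.le hH.le) _).symm
          _ = Real.sqrt (G*H) := by
              congr 1
              field_simp
      calc Real.sqrt (H/G)/2 * G + Real.sqrt (G/H)/2 * H
          = (Real.sqrt (H/G) * G + Real.sqrt (G/H) * H)/2 := by ring
        _ = Real.sqrt (G*H) := by rw [h1, h2]; ring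
    rw [show powerMean 0 G H = Real.sqrt (G*H) from if_pos rfl]
    linarith [hint, hfin.le]
  rcases lt_or_ge t 1 with ht1 | ht1
  · -- 0 < t < 1
    have hp0 : 0 < p := by linarith
    have htne : t ≠ 0 := ht0.ne'
    have ha : r ^ t ∈ Ioo (0:ℝ) 1 :=
      ⟨Real.rpow_pos_of_pos hr.1 t, Real.rpow_lt_one hr.1.le hr.2 ht0⟩
    have hb : s ^ t ∈ Ioo (0:ℝ) 1 :=
      ⟨Real.rpow_pos_of_pos hs.1 t, Real.rpow_lt_one hs.1.le hs.2 ht0⟩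
    have hmid : (r ^ t + s ^ t)/2 ∈ Ioo (0:ℝ) 1 :=
      ⟨by linarith [ha.1, hb.1], by linarith [ha.2, hb.2]⟩
    set m := ((r ^ t + s ^ t)/2) ^ (1/t) with hm_def
    have hpm : powerMean t r s = m := if_neg htne
    have hm0 : 0 < m := Real.rpow_pos_of_pos hmid.1 _
    have hm1 : m < 1 := Real.rpow_lt_one hmid.1.le hmid.2 (by positivity)
    have hmt : m ^ t = (r ^ t + s ^ t)/2 := by
      rw [hm_def, one_div, Real.rpow_inv_rpow hmid.1.le htne]
    have hG := artanhp_pos hp0 hr.1 hr.2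
    have hH := artanhp_pos hp0 hs.1 hs.2
    set G := artanhp p r with hG_def
    set H := artanhp p s with hH_def
    set N := G ^ t + H ^ t with hN_def
    have hN : 0 < N := by
      have := Real.rpow_pos_of_pos hG t; have := Real.rpow_pos_of_pos hH t; positivity
    set C1 := G ^ (t-1) * N ^ ((1-t)/t) * (2:ℝ) ^ (-(1/t)) with hC1_def
    set C2 := H ^ (t-1) * N ^ ((1-t)/t) * (2:ℝ) ^ (-(1/t)) with hC2_def
    rw [hpm]
    have point : ∀ v ∈ Icc (0:ℝ) 1,
        m * (1 - (m*v) ^ p)⁻¹ ≤ C1 * (r * (1 - (r*v) ^ p)⁻¹) + C2 * (s * (1 - (s*v) ^ p)⁻¹) := by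
      intro v hv
      set gv := r * (1 - (r*v) ^ p)⁻¹ with hgv_def
      set hv' := s * (1 - (s*v) ^ p)⁻¹ with hhv_def
      set kv := m * (1 - (m*v) ^ p)⁻¹ with hkv_def
      have hgv0 : 0 < gv := mul_pos hr.1 (inv_pos.2 (denom_pos hp0 hr.1.le hr.2 hv))
      have hhv0 : 0 < hv' := mul_pos hs.1 (inv_pos.2 (denom_pos hp0 hs.1.le hs.2 hv))
      have hkv0 : 0 < kv := mul_pos hm0 (inv_pos.2 (denom_pos hp0 hm0.le hm1 hv))
      have hc0 : (0:ℝ) ≤ v ^ p := Real.rpow_nonneg hv.1 p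
      have hc1 : v ^ p ≤ 1 := Real.rpow_le_one hv.1 hv.2 hp0.le
      -- star inequality in ^t form
      have hstar : kv ^ t ≤ (gv ^ t + hv' ^ t)/2 := by
        have h1 : kv ^ t = ((r^t + s^t)/2) * (1 - v^p * ((r^t + s^t)/2) ^ (p/t)) ^ (-t) := by
          rw [hkv_def, pow_t_form hp0 ht0 hm0 hm1 hv, hmt]
        have h2 : gv ^ t = (r^t) * (1 - v^p * (r^t) ^ (p/t)) ^ (-t) :=
          pow_t_form hp0 ht0 hr.1 hr.2 hv
        have h3 : hv' ^ t = (s^t) * (1 - v^p * (s^t) ^ (p/t)) ^ (-t) :=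
          pow_t_form hp0 ht0 hs.1 hs.2 hv
        rw [h1, h2, h3]
        have := starIneq (c := v^p) (a := r^t) (b := s^t) hp ht0 (by linarith) hc0 hc1 ha hb
        simp only [mul_comm (v^p) _] at this ⊢
        convert this using 4 <;> ring
      -- holder step
      have hidG : ∀ w : ℝ, 0 ≤ w → (w * G^(t-1))^t * (G^t)^(1-t) = w^t := by
        intro w hw
        rw [Real.mul_rpow hw (Real.rpow_nonneg hG.le _), ← Real.rpow_mul hG.le,
          ← Real.rpow_mul hG.le, mul_assoc, ← Real.rpow_add hG]
        rw [show (t-1)*t + t*(1-t) = 0 by ring, Real.rpow_zero, mul_one]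
      have hidH : ∀ w : ℝ, 0 ≤ w → (w * H^(t-1))^t * (H^t)^(1-t) = w^t := by
        intro w hw
        rw [Real.mul_rpow hw (Real.rpow_nonneg hH.le _), ← Real.rpow_mul hH.le,
          ← Real.rpow_mul hH.le, mul_assoc, ← Real.rpow_add hH]
        rw [show (t-1)*t + t*(1-t) = 0 by ring, Real.rpow_zero, mul_one]
      set X := gv * G^(t-1) + hv' * H^(t-1) with hX_def
      have hX0 : 0 ≤ X := by
        have := Real.rpow_nonneg hG.le (t-1); have := Real.rpow_nonneg hH.le (t-1)
        rw [hX_def]; positivity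
      have hhold : gv ^ t + hv' ^ t ≤ X ^ t * N ^ (1-t) := by
        rw [← hidG gv hgv0.le, ← hidH hv' hhv0.le, hX_def, hN_def]
        exact holder2 ht0 ht1 (by positivity) (Real.rpow_nonneg hG.le _)
          (by positivity) (Real.rpow_nonneg hH.le _)
      -- combine
      have hkv_le : kv ≤ ((X ^ t * N ^ (1-t))/2) ^ (1/t) := by
        have h1 : kv = (kv ^ t) ^ (1/t) := by
          rw [one_div, Real.rpow_rpow_inv hkv0.le htne]
        rw [h1]
        apply Real.rpow_le_rpow (Real.rpow_nonneg hkv0.le t) _ (by positivity)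
        calc kv ^ t ≤ (gv ^ t + hv' ^ t)/2 := hstar
          _ ≤ (X ^ t * N ^ (1-t))/2 := by linarith [hhold]
      have hfinal : ((X ^ t * N ^ (1-t))/2) ^ (1/t) = C1 * gv + C2 * hv' := by
        rw [div_eq_mul_inv, Real.mul_rpow (by positivity) (by norm_num),
          Real.mul_rpow (Real.rpow_nonneg hX0 t) (Real.rpow_nonneg hN.le _),
          one_div, Real.rpow_rpow_inv hX0 htne, ← Real.rpow_mul hN.le,
          ← Real.rpow_neg_one (2:ℝ), ← Real.rpow_mul (by norm_num : (0:ℝ) ≤ 2)]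
        rw [hX_def, hC1_def, hC2_def]
        rw [show (1-t) * t⁻¹ = (1-t)/t by ring, show (-1) * t⁻¹ = -(1/t) by ring]
        ring
      rw [hfinal] at hkv_le
      exact hkv_le
    -- integrate
    have hint : artanhp p m ≤ C1 * G + C2 * H := by
      rw [artanhp_rep]
      have e1 : (∫ v in (0:ℝ)..1, C1 * (r * (1 - (r*v) ^ p)⁻¹)) = C1 * G := by
        rw [intervalIntegral.integral_const_mul]
        rw [hG_def, artanhp_rep]
      have e2 : (∫ v in (0:ℝ)..1, C2 * (s * (1 - (s*v) ^ p)⁻¹)) = C2 * H := by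
        rw [intervalIntegral.integral_const_mul]
        rw [hH_def, artanhp_rep]
      have heq : C1 * G + C2 * H
          = ∫ v in (0:ℝ)..1, (C1 * (r * (1 - (r*v) ^ p)⁻¹) + C2 * (s * (1 - (s*v) ^ p)⁻¹)) := by
        rw [intervalIntegral.integral_add ((intble hp0 hr.1.le hr.2).const_mul C1)
          ((intble hp0 hs.1.le hs.2).const_mul C2), e1, e2]
      rw [heq]
      exact intervalIntegral.integral_mono_on zero_le_one (intble hp0 hm0.le hm1)
        (((intble hp0 hr.1.le hr.2).const_mul C1).add ((intble hp0 hs.1.le hs.2).const_mul C2))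
        point
    -- final algebra
    have hGt : G^(t-1) * G = G^t := by
      rw [← Real.rpow_add_one hG.ne' (t-1)]
      norm_num
    have hHt : H^(t-1) * H = H^t := by
      rw [← Real.rpow_add_one hH.ne' (t-1)]
      norm_num
    have hfin : C1 * G + C2 * H = ((G^t + H^t)/2) ^ (1/t) := by
      have h1 : C1 * G + C2 * H = N * N ^ ((1-t)/t) * (2:ℝ) ^ (-(1/t)) := by
        rw [hC1_def, hC2_def, hN_def, ← hGt, ← hHt]
        ring
      rw [h1]
      have h2 : N * N ^ ((1-t)/t) = N ^ (1/t) := by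
        nth_rewrite 1 [← Real.rpow_one N]
        rw [← Real.rpow_add hN]
        congr 1
        field_simp
        ring
      have h3 : ((N/2 : ℝ)) ^ (1/t) = N ^ (1/t) * (2:ℝ) ^ (-(1/t)) := by
        rw [Real.div_rpow hN.le (by norm_num), Real.rpow_neg (by norm_num : (0:ℝ) ≤ 2)]
        exact div_eq_mul_inv _ _
      rw [h2, ← hN_def, ← h3]
    rw [show powerMean t G H = ((G^t + H^t)/2) ^ (1/t) from if_neg htne]
    linarith [hint, hfin.le]
  · -- 1 ≤ t
    have hp0 : 0 < p := by linarith
    have ht0 : 0 < t := by linarith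
    have htne : t ≠ 0 := ht0.ne'
    have ha : r ^ t ∈ Ioo (0:ℝ) 1 :=
      ⟨Real.rpow_pos_of_pos hr.1 t, Real.rpow_lt_one hr.1.le hr.2 ht0⟩
    have hb : s ^ t ∈ Ioo (0:ℝ) 1 :=
      ⟨Real.rpow_pos_of_pos hs.1 t, Real.rpow_lt_one hs.1.le hs.2 ht0⟩
    have hmid : (r ^ t + s ^ t)/2 ∈ Ioo (0:ℝ) 1 := by
      constructor <;> [linarith [ha.1, hb.1]; linarith [ha.2, hb.2]]
    have hm : powerMean t r s = ((r ^ t + s ^ t)/2) ^ (1/t) := if_neg htne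
    have hmm : powerMean t r s ∈ Ioo (0:ℝ) 1 := by
      rw [hm]
      exact ⟨Real.rpow_pos_of_pos hmid.1 _, Real.rpow_lt_one hmid.1.le hmid.2 (by positivity)⟩
    have hconv := (convexH hp ht1).2 (ha : r ^ t ∈ Ioo (0:ℝ) 1) hb
      (by norm_num : (0:ℝ) ≤ 1/2) (by norm_num : (0:ℝ) ≤ 1/2) (by norm_num)
    simp only [smul_eq_mul] at hconv
    have hrr : (r ^ t) ^ (1/t) = r := by rw [one_div, Real.rpow_rpow_inv hr.1.le htne]
    have hss : (s ^ t) ^ (1/t) = s := by rw [one_div, Real.rpow_rpow_inv hs.1.le htne]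
    have hmmid : 1/2 * r ^ t + 1/2 * s ^ t = (r ^ t + s ^ t)/2 := by ring
    rw [hmmid, hrr, hss] at hconv
    -- hconv : artanhp p (((r^t+s^t)/2)^(1/t)) ^ t ≤ 1/2 * (artanhp p r)^t + 1/2 * (artanhp p s)^t
    have hG := artanhp_pos hp0 hr.1 hr.2
    have hH := artanhp_pos hp0 hs.1 hs.2
    have hM := artanhp_pos hp0 hmm.1 hmm.2
    have key : (artanhp p (powerMean t r s)) ^ t ≤ ((artanhp p r) ^ t + (artanhp p s) ^ t)/2 := by
      rw [hm]; linarith [hconv]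
    have h2 : artanhp p (powerMean t r s) = ((artanhp p (powerMean t r s)) ^ t) ^ (1/t) := by
      rw [one_div, Real.rpow_rpow_inv hM.le htne]
    have h3 : powerMean t (artanhp p r) (artanhp p s)
        = (((artanhp p r) ^ t + (artanhp p s) ^ t)/2) ^ (1/t) := if_neg htne
    rw [h3, h2]
    exact Real.rpow_le_rpow (Real.rpow_nonneg hM.le t) key (by positivity)
end

section
/- For every p > 1, every t ≥ 0, and all r, s ∈ (0,1), one has arctan_p(M_t(r,s)) ≥ M_t(arctan_p(r), arctan_p(s)). -/
open Real Set

section basic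
variable {p : ℝ}

lemma cont_integrand_s2 (hp : 1 < p) : ContinuousOn (fun u : ℝ => (1 + u ^ p)⁻¹) (Ici 0) := by
  apply ContinuousOn.inv₀
  · apply ContinuousOn.add continuousOn_const
    intro x hx
    exact (Real.continuousAt_rpow_const x p (Or.inr (by linarith))).continuousWithinAt
  · intro x hx
    have : (0:ℝ) ≤ x ^ p := Real.rpow_nonneg hx p
    positivity

lemma integrable_F (hp : 1 < p) {x : ℝ} (hx : 0 ≤ x) :
    IntervalIntegrable (fun u : ℝ => (1 + u ^ p)⁻¹) MeasureTheory.volume 0 x :=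
  ((cont_integrand_s2 hp).mono (by rw [Set.uIcc_of_le hx]; exact Icc_subset_Ici_self)).intervalIntegrable

lemma hasDerivAt_F (hp : 1 < p) {x : ℝ} (hx : 0 < x) :
    HasDerivAt (arctanp p) ((1 + x ^ p)⁻¹) x := by
  have hca : ContinuousAt (fun u : ℝ => (1 + u ^ p)⁻¹) x := by
    have h1 : ContinuousAt (fun u : ℝ => 1 + u ^ p) x :=
      continuousAt_const.add (Real.continuousAt_rpow_const x p (Or.inr (by linarith)))
    have : (0:ℝ) ≤ x ^ p := Real.rpow_nonneg hx.le p
    exact h1.inv₀ (by linarith)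
  have hm : Measurable fun u : ℝ => (1 + u ^ p)⁻¹ :=
    ((measurable_const.add (measurable_id.pow_const p)).inv)
  exact intervalIntegral.integral_hasDerivAt_right (integrable_F hp hx.le)
    hm.aestronglyMeasurable.stronglyMeasurableAtFilter hca

lemma F_pos (hp : 1 < p) {x : ℝ} (hx : 0 < x) : 0 < arctanp p x := by
  apply intervalIntegral.intervalIntegral_pos_of_pos_on (integrable_F hp hx.le) _ hx
  intro u hu
  have : (0:ℝ) ≤ u ^ p := Real.rpow_nonneg hu.1.le p
  positivity

lemma F_lt (hp : 1 < p) {x : ℝ} (hx : 0 < x) : arctanp p x < x := by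
  have h := intervalIntegral.integral_lt_integral_of_continuousOn_of_le_of_exists_lt
    (f := fun u : ℝ => (1 + u ^ p)⁻¹) (g := fun _ : ℝ => (1:ℝ)) (a := 0) (b := x) hx
    ((cont_integrand_s2 hp).mono (Icc_subset_Ici_self)) continuousOn_const
    (fun u hu => by
      have h0 : (0:ℝ) ≤ u ^ p := Real.rpow_nonneg hu.1.le p
      rw [inv_le_one_iff₀]; right; linarith)
    ⟨x, ⟨hx.le, le_rfl⟩, by
      have h0 : (0:ℝ) < x ^ p := Real.rpow_pos_of_pos hx p
      rw [inv_lt_one_iff₀]; right; linarith⟩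
  simpa [arctanp] using h

lemma F_deriv_bound (hp : 1 < p) {x : ℝ} (hx : 0 < x) :
    x * (1 + x ^ p)⁻¹ ≤ arctanp p x := by
  have h := intervalIntegral.integral_mono_on (μ := MeasureTheory.volume)
    (f := fun _ : ℝ => (1 + x ^ p)⁻¹) (g := fun u : ℝ => (1 + u ^ p)⁻¹) (a := 0) (b := x)
    hx.le intervalIntegrable_const (integrable_F hp hx.le)
    (fun u hu => by
      have h1 : u ^ p ≤ x ^ p := Real.rpow_le_rpow hu.1 hu.2 (by linarith)
      have h2 : (0:ℝ) ≤ u ^ p := Real.rpow_nonneg hu.1 p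
      apply inv_anti₀ (by linarith) (by linarith))
  simpa [arctanp, mul_comm] using h

end basic

section mono
variable {p : ℝ}

lemma G_anti (hp : 1 < p) :
    AntitoneOn (fun x : ℝ => x / ((1 + x ^ p) * arctanp p x)) (Ioo 0 1) := by
  have hD : ∀ x ∈ Ioo (0:ℝ) 1, HasDerivAt (fun y : ℝ => (1 + y ^ p) * arctanp p y)
      (p * x ^ (p - 1) * arctanp p x + (1 + x ^ p) * (1 + x ^ p)⁻¹) x := by
    intro x hx
    exact (((Real.hasDerivAt_rpow_const (p := p) (Or.inl hx.1.ne')).const_add 1).mul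
      (hasDerivAt_F hp hx.1))
  have hG : ∀ x ∈ Ioo (0:ℝ) 1, HasDerivAt (fun y : ℝ => y / ((1 + y ^ p) * arctanp p y))
      ((1 * ((1 + x ^ p) * arctanp p x) -
          x * (p * x ^ (p - 1) * arctanp p x + (1 + x ^ p) * (1 + x ^ p)⁻¹)) /
        ((1 + x ^ p) * arctanp p x) ^ 2) x := by
    intro x hx
    have hxp : (0:ℝ) ≤ x ^ p := Real.rpow_nonneg hx.1.le p
    have hne : (1 + x ^ p) * arctanp p x ≠ 0 :=
      (mul_pos (by linarith) (F_pos hp hx.1)).ne'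
    exact (hasDerivAt_id x).div (hD x hx) hne
  apply antitoneOn_of_deriv_nonpos (convex_Ioo 0 1)
  · intro x hx
    exact (hG x hx).continuousAt.continuousWithinAt
  · intro x hx
    rw [interior_Ioo] at hx
    exact (hG x hx).differentiableAt.differentiableWithinAt
  · intro x hx
    rw [interior_Ioo] at hx
    rw [(hG x hx).deriv]
    apply div_nonpos_of_nonpos_of_nonneg _ (sq_nonneg _)
    have hxp : (0:ℝ) ≤ x ^ p := Real.rpow_nonneg hx.1.le p
    have hxp' : (0:ℝ) < x ^ p := Real.rpow_pos_of_pos hx.1 p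
    have hinv : (1 + x ^ p) * (1 + x ^ p)⁻¹ = 1 := mul_inv_cancel₀ (by linarith)
    have hxx : x * x ^ (p - 1) = x ^ p := by
      rw [Real.rpow_sub hx.1, Real.rpow_one]
      rw [mul_comm x, div_mul_cancel₀ _ hx.1.ne']
    have hFlt : arctanp p x < x := F_lt hp hx.1
    have hFpos : 0 < arctanp p x := F_pos hp hx.1
    rw [hinv]
    have key : (1 + x ^ p) * arctanp p x - x * (p * x ^ (p - 1) * arctanp p x + 1) ≤ 0 := by
      have hrw : x * (p * x ^ (p - 1) * arctanp p x + 1)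
          = p * x ^ p * arctanp p x + x := by
        rw [← hxx]; ring
      rw [hrw]
      nlinarith [mul_nonneg (mul_nonneg (sub_nonneg.2 hp.le) hxp) hFpos.le]
    linarith [key]

lemma H_anti (hp : 1 < p) :
    AntitoneOn (fun x : ℝ => arctanp p x / x) (Ioo 0 1) := by
  have hG : ∀ x ∈ Ioo (0:ℝ) 1, HasDerivAt (fun y : ℝ => arctanp p y / y)
      (((1 + x ^ p)⁻¹ * x - arctanp p x * 1) / x ^ 2) x := by
    intro x hx
    exact (hasDerivAt_F hp hx.1).div (hasDerivAt_id x) hx.1.ne'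
  apply antitoneOn_of_deriv_nonpos (convex_Ioo 0 1)
  · intro x hx
    exact (hG x hx).continuousAt.continuousWithinAt
  · intro x hx
    rw [interior_Ioo] at hx
    exact (hG x hx).differentiableAt.differentiableWithinAt
  · intro x hx
    rw [interior_Ioo] at hx
    rw [(hG x hx).deriv]
    apply div_nonpos_of_nonpos_of_nonneg _ (sq_nonneg _)
    have := F_deriv_bound hp hx.1
    nlinarith

end mono

section conc
variable {p : ℝ}

lemma v_mem (ht : (0:ℝ) < 1) {t u : ℝ} (ht' : 0 < t) (hu : u ∈ Ioo (0:ℝ) 1) :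
    u ^ (1/t) ∈ Ioo (0:ℝ) 1 :=
  ⟨Real.rpow_pos_of_pos hu.1 _, Real.rpow_lt_one hu.1.le hu.2 (by positivity)⟩

lemma g_hasDeriv (hp : 1 < p) {t : ℝ} (ht : 0 < t) {u : ℝ} (hu : u ∈ Ioo (0:ℝ) 1) :
    HasDerivAt (fun y : ℝ => arctanp p (y ^ (1/t)) ^ t)
      ((arctanp p (u ^ (1/t)) / u ^ (1/t)) ^ t *
        (u ^ (1/t) / ((1 + (u ^ (1/t)) ^ p) * arctanp p (u ^ (1/t))))) u := by
  set v := u ^ (1/t) with hv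
  have hvm : v ∈ Ioo (0:ℝ) 1 := v_mem one_pos ht hu
  have hF : 0 < arctanp p v := F_pos hp hvm.1
  have h1vp : (0:ℝ) < 1 + v ^ p := by
    have := Real.rpow_nonneg hvm.1.le p; linarith
  have h1 : HasDerivAt (fun y : ℝ => y ^ (1/t)) (1/t * u ^ (1/t - 1)) u :=
    Real.hasDerivAt_rpow_const (Or.inl hu.1.ne')
  have h2 : HasDerivAt (arctanp p) ((1 + v ^ p)⁻¹) v := hasDerivAt_F hp hvm.1
  have h3 : HasDerivAt (fun z : ℝ => z ^ t) (t * arctanp p v ^ (t - 1)) (arctanp p v) :=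
    Real.hasDerivAt_rpow_const (Or.inl hF.ne')
  have hcomp := h3.comp u (h2.comp u h1)
  have huv : v ^ t = u := by
    rw [hv, ← Real.rpow_mul hu.1.le, one_div, inv_mul_cancel₀ ht.ne', Real.rpow_one]
  have hu1t : u ^ (1/t - 1) = v / u := by
    rw [Real.rpow_sub hu.1, Real.rpow_one, hv]
  have heq : (arctanp p v / v) ^ t * (v / ((1 + v ^ p) * arctanp p v))
      = t * arctanp p v ^ (t - 1) * ((1 + v ^ p)⁻¹ * (1/t * u ^ (1/t - 1))) := by
    have e1 : arctanp p v ≠ 0 := hF.ne'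
    have e2 : (1 + v ^ p) ≠ 0 := h1vp.ne'
    have e3 : u ≠ 0 := hu.1.ne'
    have e4 : t ≠ 0 := ht.ne'
    rw [hu1t, Real.div_rpow hF.le hvm.1.le, huv, Real.rpow_sub hF, Real.rpow_one]
    field_simp
  rw [heq]
  exact hcomp

lemma g_concave (hp : 1 < p) {t : ℝ} (ht : 0 < t) :
    ConcaveOn ℝ (Ioo (0:ℝ) 1) (fun y : ℝ => arctanp p (y ^ (1/t)) ^ t) := by
  have hderiv : ∀ u ∈ Ioo (0:ℝ) 1,
      deriv (fun y : ℝ => arctanp p (y ^ (1/t)) ^ t) u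
        = (arctanp p (u ^ (1/t)) / u ^ (1/t)) ^ t *
            (u ^ (1/t) / ((1 + (u ^ (1/t)) ^ p) * arctanp p (u ^ (1/t)))) :=
    fun u hu => (g_hasDeriv hp ht hu).deriv
  apply AntitoneOn.concaveOn_of_deriv (convex_Ioo 0 1)
  · intro u hu
    exact (g_hasDeriv hp ht hu).continuousAt.continuousWithinAt
  · intro u hu
    rw [interior_Ioo] at hu
    exact (g_hasDeriv hp ht hu).differentiableAt.differentiableWithinAt
  · intro u₁ hu₁ u₂ hu₂ h12
    rw [interior_Ioo] at hu₁ hu₂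
    rw [hderiv u₁ hu₁, hderiv u₂ hu₂]
    set v₁ := u₁ ^ (1/t)
    set v₂ := u₂ ^ (1/t)
    have hv₁ : v₁ ∈ Ioo (0:ℝ) 1 := v_mem one_pos ht hu₁
    have hv₂ : v₂ ∈ Ioo (0:ℝ) 1 := v_mem one_pos ht hu₂
    have hvle : v₁ ≤ v₂ := Real.rpow_le_rpow hu₁.1.le h12 (by positivity)
    have hA : (arctanp p v₂ / v₂) ^ t ≤ (arctanp p v₁ / v₁) ^ t := by
      exact Real.rpow_le_rpow (div_nonneg (F_pos hp hv₂.1).le hv₂.1.le)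
        (H_anti hp hv₁ hv₂ hvle) ht.le
    have hB : v₂ / ((1 + v₂ ^ p) * arctanp p v₂) ≤ v₁ / ((1 + v₁ ^ p) * arctanp p v₁) :=
      G_anti hp hv₁ hv₂ hvle
    have hBpos : 0 ≤ v₂ / ((1 + v₂ ^ p) * arctanp p v₂) := by
      have h2 : (0:ℝ) ≤ v₂ ^ p := Real.rpow_nonneg hv₂.1.le p
      exact div_nonneg hv₂.1.le
        (mul_nonneg (by linarith) (F_pos hp hv₂.1).le)
    have hApos : 0 ≤ (arctanp p v₁ / v₁) ^ t :=
      Real.rpow_nonneg (div_nonneg (F_pos hp hv₁.1).le hv₁.1.le) t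
    exact mul_le_mul hA hB hBpos hApos

lemma k_hasDeriv (hp : 1 < p) {u : ℝ} (hu : u < 0) :
    HasDerivAt (fun y : ℝ => Real.log (arctanp p (Real.exp y)))
      (Real.exp u / ((1 + Real.exp u ^ p) * arctanp p (Real.exp u))) u := by
  set v := Real.exp u with hv
  have hvm : v ∈ Ioo (0:ℝ) 1 := ⟨Real.exp_pos u, Real.exp_lt_one_iff.2 hu⟩
  have hF : 0 < arctanp p v := F_pos hp hvm.1
  have h1vp : (0:ℝ) < 1 + v ^ p := by
    have := Real.rpow_nonneg hvm.1.le p; linarith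
  have h1 : HasDerivAt Real.exp v u := Real.hasDerivAt_exp u
  have h2 : HasDerivAt (arctanp p) ((1 + v ^ p)⁻¹) v := hasDerivAt_F hp hvm.1
  have h3 : HasDerivAt Real.log (arctanp p v)⁻¹ (arctanp p v) := Real.hasDerivAt_log hF.ne'
  have hcomp := h3.comp u (h2.comp u h1)
  have heq : v / ((1 + v ^ p) * arctanp p v) = (arctanp p v)⁻¹ * ((1 + v ^ p)⁻¹ * v) := by
    field_simp
  rw [heq]
  exact hcomp

lemma k_concave (hp : 1 < p) :
    ConcaveOn ℝ (Iio (0:ℝ)) (fun y : ℝ => Real.log (arctanp p (Real.exp y))) := by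
  apply AntitoneOn.concaveOn_of_deriv (convex_Iio 0)
  · intro u hu
    exact (k_hasDeriv hp hu).continuousAt.continuousWithinAt
  · intro u hu
    rw [interior_Iio] at hu
    exact (k_hasDeriv hp hu).differentiableAt.differentiableWithinAt
  · intro u₁ hu₁ u₂ hu₂ h12
    rw [interior_Iio] at hu₁ hu₂
    rw [(k_hasDeriv hp hu₁).deriv, (k_hasDeriv hp hu₂).deriv]
    exact G_anti hp ⟨Real.exp_pos u₁, Real.exp_lt_one_iff.2 hu₁⟩
      ⟨Real.exp_pos u₂, Real.exp_lt_one_iff.2 hu₂⟩ (Real.exp_le_exp.2 h12)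

end conc

lemma sqrt_eq_exp' {a b : ℝ} (ha : 0 < a) (hb : 0 < b) :
    Real.sqrt (a * b) = Real.exp (1/2 * Real.log a + 1/2 * Real.log b) := by
  rw [show 1/2 * Real.log a + 1/2 * Real.log b = Real.log (a * b) * (1/2) by
      rw [Real.log_mul ha.ne' hb.ne']; ring,
    ← Real.rpow_def_of_pos (mul_pos ha hb), Real.sqrt_eq_rpow]

theorem arctanp_powerMean_ge (p t : ℝ) (hp : 1 < p) (ht : 0 ≤ t)
    (r s : ℝ) (hr : r ∈ Set.Ioo (0:ℝ) 1) (hs : s ∈ Set.Ioo (0:ℝ) 1) :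
    powerMean t (arctanp p r) (arctanp p s) ≤ arctanp p (powerMean t r s) := by
  rcases eq_or_lt_of_le ht with h0 | ht'
  · -- t = 0
    subst h0
    rw [powerMean, powerMean, if_pos rfl, if_pos rfl]
    have hrs : 0 < r * s := mul_pos hr.1 hs.1
    have hrs1 : r * s < 1 := by nlinarith [hr.2, hs.2, hr.1, hs.1]
    have hsq : Real.sqrt (r * s) ∈ Ioo (0:ℝ) 1 := by
      constructor
      · exact Real.sqrt_pos.2 hrs
      · rw [show (1:ℝ) = Real.sqrt 1 by simp]
        exact Real.sqrt_lt_sqrt hrs.le hrs1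
    have ha : Real.log r ∈ Iio (0:ℝ) := Real.log_neg hr.1 hr.2
    have hb : Real.log s ∈ Iio (0:ℝ) := Real.log_neg hs.1 hs.2
    have hk := (k_concave hp).2 ha hb (by norm_num : (0:ℝ) ≤ 1/2) (by norm_num : (0:ℝ) ≤ 1/2)
      (by norm_num)
    simp only [smul_eq_mul, Real.exp_log hr.1, Real.exp_log hs.1] at hk
    rw [show Real.exp (1/2 * Real.log r + 1/2 * Real.log s) = Real.sqrt (r * s) from
      (sqrt_eq_exp' hr.1 hs.1).symm] at hk
    rw [sqrt_eq_exp' (F_pos hp hr.1) (F_pos hp hs.1)]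
    calc Real.exp (1/2 * Real.log (arctanp p r) + 1/2 * Real.log (arctanp p s))
        ≤ Real.exp (Real.log (arctanp p (Real.sqrt (r * s)))) := Real.exp_le_exp.2 hk
      _ = arctanp p (Real.sqrt (r * s)) := Real.exp_log (F_pos hp hsq.1)
  · -- 0 < t
    have hne : t ≠ 0 := ht'.ne'
    rw [powerMean, powerMean, if_neg hne, if_neg hne]
    have ha : r ^ t ∈ Ioo (0:ℝ) 1 :=
      ⟨Real.rpow_pos_of_pos hr.1 t, Real.rpow_lt_one hr.1.le hr.2 ht'⟩
    have hb : s ^ t ∈ Ioo (0:ℝ) 1 :=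
      ⟨Real.rpow_pos_of_pos hs.1 t, Real.rpow_lt_one hs.1.le hs.2 ht'⟩
    have hmean : (r ^ t + s ^ t) / 2 ∈ Ioo (0:ℝ) 1 := by
      constructor
      · have := ha.1; have := hb.1; linarith
      · have := ha.2; have := hb.2; linarith
    have hM : ((r ^ t + s ^ t) / 2) ^ (1/t) ∈ Ioo (0:ℝ) 1 :=
      ⟨Real.rpow_pos_of_pos hmean.1 _, Real.rpow_lt_one hmean.1.le hmean.2 (by positivity)⟩
    have hg := (g_concave hp ht').2 ha hb (by norm_num : (0:ℝ) ≤ 1/2)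
      (by norm_num : (0:ℝ) ≤ 1/2) (by norm_num)
    simp only [smul_eq_mul] at hg
    have hinv : ∀ x : ℝ, 0 < x → (x ^ t) ^ (1/t) = x := by
      intro x hx
      rw [← Real.rpow_mul hx.le, mul_one_div, div_self hne, Real.rpow_one]
    rw [hinv r hr.1, hinv s hs.1,
      show 1/2 * r ^ t + 1/2 * s ^ t = (r ^ t + s ^ t) / 2 by ring] at hg
    have hFM := F_pos hp hM.1
    have hfr := F_pos hp hr.1
    have hfs := F_pos hp hs.1
    calc ((arctanp p r ^ t + arctanp p s ^ t) / 2) ^ (1/t)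
        ≤ (arctanp p (((r ^ t + s ^ t) / 2) ^ (1/t)) ^ t) ^ (1/t) := by
          apply Real.rpow_le_rpow _ _ (by positivity)
          · have h1 : (0:ℝ) ≤ arctanp p r ^ t := Real.rpow_nonneg hfr.le t
            have h2 : (0:ℝ) ≤ arctanp p s ^ t := Real.rpow_nonneg hfs.le t
            linarith
          · linarith [hg]
      _ = arctanp p (((r ^ t + s ^ t) / 2) ^ (1/t)) := by
          rw [← Real.rpow_mul hFM.le, mul_one_div, div_self hne, Real.rpow_one]
end

section
/- For every p > 1, every t ≥ 0, and all r, s ∈ (0,1), one has arsinh_p(M_t(r,s)) ≥ M_t(arsinh_p(r), arsinh_p(s)). -/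
open Real Set

open Real Set MeasureTheory intervalIntegral


section aux
variable {p : ℝ}

private lemma arsp_base_pos (hp : 0 < p) {u : ℝ} (hu : 0 ≤ u) : 0 < 1 + u ^ p := by
  have := Real.rpow_nonneg hu p; linarith

private lemma arsp_cont (hp : 0 < p) :
    ContinuousOn (fun u : ℝ => (1 + u ^ p) ^ (-(1 / p))) (Ici 0) := by
  have h1 : Continuous fun u : ℝ => 1 + u ^ p :=
    continuous_const.add (continuous_iff_continuousAt.2 fun x =>
      Real.continuousAt_rpow_const x p (Or.inr hp.le))
  exact h1.continuousOn.rpow_const fun x hx => Or.inl (arsp_base_pos hp hx).ne'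

private lemma arsp_contAt (hp : 0 < p) {x : ℝ} (hx : 0 ≤ x) :
    ContinuousAt (fun u : ℝ => (1 + u ^ p) ^ (-(1 / p))) x := by
  have h1 : ContinuousAt (fun u : ℝ => 1 + u ^ p) x :=
    continuousAt_const.add (Real.continuousAt_rpow_const x p (Or.inr hp.le))
  exact h1.rpow_const (Or.inl (arsp_base_pos hp hx).ne')

private lemma arsp_intgr (hp : 0 < p) {x : ℝ} (hx : 0 ≤ x) :
    IntervalIntegrable (fun u : ℝ => (1 + u ^ p) ^ (-(1 / p))) volume 0 x := by
  apply ContinuousOn.intervalIntegrable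
  rw [uIcc_of_le hx]
  exact (arsp_cont hp).mono (Icc_subset_Ici_self)

private lemma arsp_le_self (hp : 0 < p) {x : ℝ} (hx : 0 ≤ x) : arsinhp p x ≤ x := by
  have h := intervalIntegral.integral_mono_on hx (arsp_intgr hp hx)
    (_root_.intervalIntegrable_const)
    (fun u hu => Real.rpow_le_one_of_one_le_of_nonpos
      (by have := Real.rpow_nonneg hu.1 p; linarith)
      (neg_nonpos.mpr (by positivity)))
  simpa [arsinhp] using h

private lemma arsp_ge (hp : 0 < p) {x : ℝ} (hx : 0 ≤ x) :
    x * (1 + x ^ p) ^ (-(1 / p)) ≤ arsinhp p x := by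
  have h := intervalIntegral.integral_mono_on hx
    (_root_.intervalIntegrable_const (c := (1 + x ^ p) ^ (-(1 / p)))) (arsp_intgr hp hx)
    (fun u hu => by
      refine Real.rpow_le_rpow_of_nonpos (arsp_base_pos hp hu.1) ?_
        (neg_nonpos.mpr (by positivity))
      have := Real.rpow_le_rpow hu.1 hu.2 hp.le
      linarith)
  simpa [arsinhp, mul_comm] using h

private lemma arsp_pos (hp : 0 < p) {x : ℝ} (hx : 0 < x) : 0 < arsinhp p x := by
  have h := arsp_ge hp hx.le
  have : 0 < x * (1 + x ^ p) ^ (-(1 / p)) :=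
    mul_pos hx (Real.rpow_pos_of_pos (arsp_base_pos hp hx.le) _)
  linarith

private lemma arsp_hasDeriv (hp : 0 < p) {x : ℝ} (hx : 0 < x) :
    HasDerivAt (arsinhp p) ((1 + x ^ p) ^ (-(1 / p))) x := by
  have hmeas := ContinuousOn.stronglyMeasurableAtFilter (μ := volume) isOpen_Ioi
    ((arsp_cont hp).mono Ioi_subset_Ici_self) x hx
  exact intervalIntegral.integral_hasDerivAt_right (arsp_intgr hp hx.le) hmeas
    (arsp_contAt hp hx.le)

end aux

section aux2
variable {p : ℝ}

private lemma arsp_h_hasDeriv (hp : 0 < p) {x : ℝ} (hx : 0 < x) :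
    HasDerivAt (fun y : ℝ => y * (1 + y ^ p) ^ (-(1 / p)))
      ((1 + x ^ p) ^ (-(1 / p) - 1)) x := by
  have hb := arsp_base_pos hp hx.le
  have h1 : HasDerivAt (fun y : ℝ => 1 + y ^ p) (p * x ^ (p - 1)) x :=
    (Real.hasDerivAt_rpow_const (Or.inl hx.ne')).const_add 1
  have h3 : HasDerivAt (fun z : ℝ => z ^ (-(1 / p)))
      (-(1 / p) * (1 + x ^ p) ^ (-(1 / p) - 1)) (1 + x ^ p) :=
    Real.hasDerivAt_rpow_const (Or.inl hb.ne')
  have h4 := (h3.comp x h1)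
  have h5 := (hasDerivAt_id x).mul h4
  refine h5.congr_deriv ?_
  have e2 : x * x ^ (p - 1) = x ^ p := by
    nth_rewrite 1 [← Real.rpow_one x]
    rw [← Real.rpow_add hx]; ring_nf
  have e3 : (1 + x ^ p) ^ (-(1 / p)) = (1 + x ^ p) ^ (-(1 / p) - 1) * (1 + x ^ p) := by
    rw [← Real.rpow_add_one hb.ne' (-(1 / p) - 1)]; ring_nf
  have hp' : p ≠ 0 := hp.ne'
  simp only [Function.comp_def, id_eq]
  rw [e3, show x * (-(1 / p) * (1 + x ^ p) ^ (-(1 / p) - 1) * (p * x ^ (p - 1)))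
      = -((1 / p) * p) * ((1 + x ^ p) ^ (-(1 / p) - 1) * (x * x ^ (p - 1))) by ring,
    e2, one_div, inv_mul_cancel₀ hp']
  ring

end aux2

section aux3
variable {p : ℝ}

private lemma anti_of_deriv' {f f' : ℝ → ℝ} (hder : ∀ x ∈ Ioo (0:ℝ) 1, HasDerivAt f (f' x) x)
    (hnp : ∀ x ∈ Ioo (0:ℝ) 1, f' x ≤ 0) : AntitoneOn f (Ioo 0 1) := by
  refine antitoneOn_of_hasDerivWithinAt_nonpos (f' := f') (convex_Ioo (0:ℝ) 1)
    (fun x hx => ((hder x hx).continuousAt).continuousWithinAt) ?_ ?_ <;>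
    simp only [interior_Ioo]
  · exact fun x hx => (hder x hx).hasDerivWithinAt
  · exact hnp

private lemma arsp_G_hasDeriv (hp : 0 < p) {x : ℝ} (hx : 0 < x) :
    HasDerivAt (fun y : ℝ => y * (1 + y ^ p) ^ (-(1 / p)) / arsinhp p y)
      (((1 + x ^ p) ^ (-(1 / p) - 1) * arsinhp p x
        - x * (1 + x ^ p) ^ (-(1 / p)) * ((1 + x ^ p) ^ (-(1 / p))))
        / (arsinhp p x) ^ 2) x :=
  (arsp_h_hasDeriv hp hx).div (arsp_hasDeriv hp hx) (arsp_pos hp hx).ne'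

private lemma arsp_G_deriv_nonpos (hp : 1 < p) {x : ℝ} (hx : 0 < x) :
    ((1 + x ^ p) ^ (-(1 / p) - 1) * arsinhp p x
        - x * (1 + x ^ p) ^ (-(1 / p)) * ((1 + x ^ p) ^ (-(1 / p))))
        / (arsinhp p x) ^ 2 ≤ 0 := by
  have hp0 : 0 < p := one_pos.trans hp
  have hb := arsp_base_pos hp0 hx.le
  have hb1 : (1:ℝ) ≤ 1 + x ^ p := by
    have := Real.rpow_nonneg hx.le p; linarith
  apply div_nonpos_of_nonpos_of_nonneg _ (sq_nonneg _)
  have e1 : (1 + x ^ p) ^ (-(1 / p)) * ((1 + x ^ p) ^ (-(1 / p)))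
      = (1 + x ^ p) ^ (-(1 / p) + -(1 / p)) := (Real.rpow_add hb _ _).symm
  have h1 : (1 + x ^ p) ^ (-(1 / p) - 1) * arsinhp p x
      ≤ (1 + x ^ p) ^ (-(1 / p) - 1) * x :=
    mul_le_mul_of_nonneg_left (arsp_le_self hp0 hx.le)
      (Real.rpow_pos_of_pos hb _).le
  have h2 : (1 + x ^ p) ^ (-(1 / p) - 1) ≤ (1 + x ^ p) ^ (-(1 / p) + -(1 / p)) := by
    apply Real.rpow_le_rpow_of_exponent_le hb1
    have h3 : 1 / p ≤ 1 := by
      rw [div_le_one hp0]; linarith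
    linarith
  have h4 : (1 + x ^ p) ^ (-(1 / p) - 1) * x ≤ (1 + x ^ p) ^ (-(1 / p) + -(1 / p)) * x :=
    mul_le_mul_of_nonneg_right h2 hx.le
  nlinarith [h1, h4, e1]

private lemma arsp_G_anti (hp : 1 < p) :
    AntitoneOn (fun x : ℝ => x * (1 + x ^ p) ^ (-(1 / p)) / arsinhp p x) (Ioo 0 1) := by
  have hp0 : 0 < p := one_pos.trans hp
  exact anti_of_deriv' (fun x hx => arsp_G_hasDeriv hp0 hx.1)
    (fun x hx => arsp_G_deriv_nonpos hp hx.1)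

private lemma arsp_q_anti (hp : 1 < p) :
    AntitoneOn (fun x : ℝ => arsinhp p x / x) (Ioo 0 1) := by
  have hp0 : 0 < p := one_pos.trans hp
  refine anti_of_deriv'
    (f' := fun x => ((1 + x ^ p) ^ (-(1 / p)) * x - arsinhp p x * 1) / x ^ 2) ?_ ?_
  · intro x hx
    exact (arsp_hasDeriv hp0 hx.1).div (hasDerivAt_id x) hx.1.ne'
  · intro x hx
    apply div_nonpos_of_nonpos_of_nonneg _ (sq_nonneg _)
    have := arsp_ge hp0 hx.1.le
    nlinarith [this]

end aux3


theorem arsinhp_powerMean_ge (p t : ℝ) (hp : 1 < p) (ht : 0 ≤ t)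
    (r s : ℝ) (hr : r ∈ Set.Ioo (0:ℝ) 1) (hs : s ∈ Set.Ioo (0:ℝ) 1) :
    powerMean t (arsinhp p r) (arsinhp p s) ≤ arsinhp p (powerMean t r s) := by
  have hp0 : 0 < p := one_pos.trans hp
  obtain ⟨hr0, hr1⟩ := hr
  obtain ⟨hs0, hs1⟩ := hs
  rcases ht.eq_or_lt with h0 | htpos
  · -- t = 0 : geometric mean case
    subst h0
    simp only [powerMean, if_pos rfl]
    -- concavity of u ↦ log (arsinhp p (exp u)) on Iio 0
    set L : ℝ → ℝ := fun u => Real.log (arsinhp p (Real.exp u)) with hL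
    have hLder : ∀ u ∈ Iio (0:ℝ), HasDerivAt L
        (Real.exp u * (1 + (Real.exp u) ^ p) ^ (-(1 / p)) / arsinhp p (Real.exp u)) u := by
      intro u _
      have h1 : HasDerivAt Real.exp (Real.exp u) u := Real.hasDerivAt_exp u
      have h2 : HasDerivAt (arsinhp p) ((1 + (Real.exp u) ^ p) ^ (-(1 / p))) (Real.exp u) :=
        arsp_hasDeriv hp0 (Real.exp_pos u)
      have h3 : HasDerivAt Real.log ((arsinhp p (Real.exp u))⁻¹) (arsinhp p (Real.exp u)) :=
        Real.hasDerivAt_log (arsp_pos hp0 (Real.exp_pos u)).ne'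
      have h4 := h3.comp u (h2.comp u h1)
      refine h4.congr_deriv ?_
      rw [div_eq_mul_inv]; ring
    have hmem : ∀ u : ℝ, u ∈ Iio (0:ℝ) → Real.exp u ∈ Ioo (0:ℝ) 1 := fun u hu =>
      ⟨Real.exp_pos u, Real.exp_lt_one_iff.2 hu⟩
    have hanti : AntitoneOn (deriv L) (interior (Iio (0:ℝ))) := by
      simp only [interior_Iio]
      intro a ha b hb hab
      rw [(hLder a ha).deriv, (hLder b hb).deriv]
      have := arsp_G_anti hp (hmem a ha) (hmem b hb) (Real.exp_le_exp.2 hab)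
      simpa using this
    have hconc : ConcaveOn ℝ (Iio (0:ℝ)) L := by
      refine AntitoneOn.concaveOn_of_deriv (convex_Iio 0)
        (fun u hu => (hLder u hu).continuousAt.continuousWithinAt) ?_ hanti
      simp only [interior_Iio]
      exact fun u hu => (hLder u hu).differentiableAt.differentiableWithinAt
    have hlr : Real.log r ∈ Iio (0:ℝ) := Real.log_neg hr0 hr1
    have hls : Real.log s ∈ Iio (0:ℝ) := Real.log_neg hs0 hs1
    have hcc := hconc.2 hlr hls (by norm_num : (0:ℝ) ≤ 1/2) (by norm_num : (0:ℝ) ≤ 1/2)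
      (by norm_num)
    simp only [smul_eq_mul] at hcc
    set m : ℝ := 1/2 * Real.log r + 1/2 * Real.log s with hm
    have hexpm : Real.exp m = Real.sqrt (r * s) := by
      have h1 : Real.exp m * Real.exp m = r * s := by
        rw [← Real.exp_add]
        have : m + m = Real.log r + Real.log s := by rw [hm]; ring
        rw [this, Real.exp_add, Real.exp_log hr0, Real.exp_log hs0]
      rw [← h1, Real.sqrt_mul_self (Real.exp_pos m).le]
    have hLr : L (Real.log r) = Real.log (arsinhp p r) := by
      rw [hL]; simp [Real.exp_log hr0]
    have hLs : L (Real.log s) = Real.log (arsinhp p s) := by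
      rw [hL]; simp [Real.exp_log hs0]
    have hLm : L m = Real.log (arsinhp p (Real.sqrt (r * s))) := by
      show Real.log (arsinhp p (Real.exp m)) = _
      rw [hexpm]
    rw [hLr, hLs, hLm] at hcc
    -- now exponentiate
    have hfr := arsp_pos hp0 hr0
    have hfs := arsp_pos hp0 hs0
    have hsq : 0 < Real.sqrt (r * s) := Real.sqrt_pos.2 (mul_pos hr0 hs0)
    have hfsq := arsp_pos hp0 hsq
    have key := Real.exp_le_exp.2 hcc
    have h2 : Real.exp (1/2 * Real.log (arsinhp p r) + 1/2 * Real.log (arsinhp p s))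
        = Real.sqrt (arsinhp p r * arsinhp p s) := by
      have h1 : Real.exp (1/2 * Real.log (arsinhp p r) + 1/2 * Real.log (arsinhp p s)) *
          Real.exp (1/2 * Real.log (arsinhp p r) + 1/2 * Real.log (arsinhp p s))
          = arsinhp p r * arsinhp p s := by
        rw [← Real.exp_add]
        have : (1/2 * Real.log (arsinhp p r) + 1/2 * Real.log (arsinhp p s)) +
            (1/2 * Real.log (arsinhp p r) + 1/2 * Real.log (arsinhp p s))
            = Real.log (arsinhp p r) + Real.log (arsinhp p s) := by ring
        rw [this, Real.exp_add, Real.exp_log hfr, Real.exp_log hfs]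
      rw [← h1, Real.sqrt_mul_self (Real.exp_pos _).le]
    rw [h2, Real.exp_log hfsq] at key
    exact key
  · -- t > 0 case
    have htne : t ≠ 0 := htpos.ne'
    have h1t : 0 < 1 / t := by positivity
    set X := r ^ t with hX
    set Y := s ^ t with hY
    have hXm : X ∈ Ioo (0:ℝ) 1 := ⟨Real.rpow_pos_of_pos hr0 t, Real.rpow_lt_one hr0.le hr1 htpos⟩
    have hYm : Y ∈ Ioo (0:ℝ) 1 := ⟨Real.rpow_pos_of_pos hs0 t, Real.rpow_lt_one hs0.le hs1 htpos⟩
    set F : ℝ → ℝ := fun Z => (arsinhp p (Z ^ (1/t))) ^ t with hF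
    set Φ : ℝ → ℝ := fun x => (arsinhp p x / x) ^ t * (x * (1 + x ^ p) ^ (-(1 / p)) / arsinhp p x)
      with hΦ
    have hrootmem : ∀ Z : ℝ, Z ∈ Ioo (0:ℝ) 1 → Z ^ (1/t) ∈ Ioo (0:ℝ) 1 := fun Z hZ =>
      ⟨Real.rpow_pos_of_pos hZ.1 _, Real.rpow_lt_one hZ.1.le hZ.2 h1t⟩
    have hFder : ∀ Z ∈ Ioo (0:ℝ) 1, HasDerivAt F (Φ (Z ^ (1/t))) Z := by
      intro Z hZ
      set z := Z ^ (1/t) with hz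
      have hzm := hrootmem Z hZ
      have hfz := arsp_pos hp0 hzm.1
      have h1 : HasDerivAt (fun W : ℝ => W ^ (1/t)) ((1/t) * Z ^ (1/t - 1)) Z :=
        Real.hasDerivAt_rpow_const (Or.inl hZ.1.ne')
      have h2 : HasDerivAt (arsinhp p) ((1 + z ^ p) ^ (-(1 / p))) z :=
        arsp_hasDeriv hp0 hzm.1
      have h3 : HasDerivAt (fun w : ℝ => w ^ t) (t * (arsinhp p z) ^ (t - 1)) (arsinhp p z) :=
        Real.hasDerivAt_rpow_const (Or.inl hfz.ne')
      have h4 := h3.comp Z (h2.comp Z h1)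
      refine h4.congr_deriv ?_
      -- algebraic identity
      have hZz : z ^ t = Z := by
        rw [hz, one_div, Real.rpow_inv_rpow hZ.1.le htne]
      have e1 : Z ^ (1/t - 1) = z / Z := by
        rw [Real.rpow_sub hZ.1, Real.rpow_one, ← hz]
      have e2 : (arsinhp p z / z) ^ t = (arsinhp p z) ^ (t-1) * arsinhp p z / Z := by
        rw [Real.div_rpow hfz.le hzm.1.le, hZz]
        congr 1
        rw [← Real.rpow_add_one hfz.ne' (t-1)]; ring_nf
      rw [hΦ]
      simp only
      rw [e1, e2]
      field_simp [hfz.ne', hZ.1.ne', htne]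
      exact (mul_inv_cancel_right₀ hfz.ne' _).symm
    have hΦanti : ∀ a ∈ Ioo (0:ℝ) 1, ∀ b ∈ Ioo (0:ℝ) 1, a ≤ b → Φ b ≤ Φ a := by
      intro a ha b hb hab
      have hfa := arsp_pos hp0 ha.1
      have hfb := arsp_pos hp0 hb.1
      have h1 : (arsinhp p b / b) ^ t ≤ (arsinhp p a / a) ^ t := by
        apply Real.rpow_le_rpow (div_nonneg hfb.le hb.1.le) ?_ htpos.le
        exact arsp_q_anti hp ha hb hab
      have h2 : b * (1 + b ^ p) ^ (-(1 / p)) / arsinhp p b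
          ≤ a * (1 + a ^ p) ^ (-(1 / p)) / arsinhp p a := by
        have := arsp_G_anti hp ha hb hab
        simpa using this
      have h3 : (0:ℝ) ≤ b * (1 + b ^ p) ^ (-(1 / p)) / arsinhp p b :=
        div_nonneg (mul_nonneg hb.1.le (Real.rpow_nonneg (arsp_base_pos hp0 hb.1.le).le _)) hfb.le
      have h4 : (0:ℝ) ≤ (arsinhp p a / a) ^ t := Real.rpow_nonneg (div_nonneg hfa.le ha.1.le) t
      exact mul_le_mul h1 h2 h3 h4
    have hanti : AntitoneOn (deriv F) (interior (Ioo (0:ℝ) 1)) := by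
      simp only [interior_Ioo]
      intro a ha b hb hab
      rw [(hFder a ha).deriv, (hFder b hb).deriv]
      exact hΦanti _ (hrootmem a ha) _ (hrootmem b hb)
        (Real.rpow_le_rpow ha.1.le hab h1t.le)
    have hconc : ConcaveOn ℝ (Ioo (0:ℝ) 1) F := by
      refine AntitoneOn.concaveOn_of_deriv (convex_Ioo 0 1)
        (fun Z hZ => (hFder Z hZ).continuousAt.continuousWithinAt) ?_ hanti
      simp only [interior_Ioo]
      exact fun Z hZ => (hFder Z hZ).differentiableAt.differentiableWithinAt
    have hcc := hconc.2 hXm hYm (by norm_num : (0:ℝ) ≤ 1/2) (by norm_num : (0:ℝ) ≤ 1/2)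
      (by norm_num)
    simp only [smul_eq_mul] at hcc
    have hMm : 1/2 * X + 1/2 * Y ∈ Ioo (0:ℝ) 1 := by
      constructor
      · nlinarith [hXm.1, hYm.1]
      · nlinarith [hXm.2, hYm.2]
    have hinv : ∀ w : ℝ, 0 ≤ w → (w ^ t) ^ (1/t) = w := fun w hw => by
      rw [one_div, Real.rpow_rpow_inv hw htne]
    have hFX : F X = arsinhp p r ^ t := by
      show arsinhp p (X ^ (1/t)) ^ t = _
      rw [hX, one_div, Real.rpow_rpow_inv hr0.le htne]
    have hFY : F Y = arsinhp p s ^ t := by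
      show arsinhp p (Y ^ (1/t)) ^ t = _
      rw [hY, one_div, Real.rpow_rpow_inv hs0.le htne]
    rw [hFX, hFY] at hcc
    simp only [powerMean, if_neg htne]
    have hmid : (X + Y) / 2 = 1/2 * X + 1/2 * Y := by ring
    have hgoalrhs : ((r ^ t + s ^ t) / 2) ^ (1/t) = (1/2 * X + 1/2 * Y) ^ (1/t) := by
      rw [← hX, ← hY, hmid]
    rw [hgoalrhs]
    have hfM := arsp_pos hp0 (hrootmem _ hMm).1
    calc ((arsinhp p r ^ t + arsinhp p s ^ t) / 2) ^ (1/t)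
        = (1/2 * arsinhp p r ^ t + 1/2 * arsinhp p s ^ t) ^ (1/t) := by ring_nf
      _ ≤ (F (1/2 * X + 1/2 * Y)) ^ (1/t) := by
          apply Real.rpow_le_rpow ?_ hcc h1t.le
          have := Real.rpow_nonneg (arsp_pos hp0 hr0).le t
          have := Real.rpow_nonneg (arsp_pos hp0 hs0).le t
          linarith
      _ = arsinhp p ((1/2 * X + 1/2 * Y) ^ (1/t)) := by
          show (arsinhp p ((1/2 * X + 1/2 * Y) ^ (1/t)) ^ t) ^ (1/t) = _
          exact hinv _ hfM.le
end

section
/- For every p > 1, every t ≥ 1, and all r, s ∈ (0,1), one has sin_p(M_t(r,s)) ≥ M_t(sin_p(r), sin_p(s)). -/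
open Real Set

noncomputable def gp (p : ℝ) : ℝ → ℝ := fun u => (1 - u ^ p) ^ (-(1 / p))

section aux

lemma gp_pow_cont {p : ℝ} (hp : 1 < p) : Continuous fun u : ℝ => u ^ p := by
  rw [continuous_iff_continuousAt]
  intro u
  exact Real.continuousAt_rpow_const u p (Or.inr (by linarith))

lemma gp_contAt {p : ℝ} (hp : 1 < p) {x : ℝ} (hx : x ∈ Ioo (0:ℝ) 1) : ContinuousAt (gp p) x := by
  have h1 : (1:ℝ) - x ^ p ≠ 0 := by
    have : x ^ p < 1 := Real.rpow_lt_one hx.1.le hx.2 (by linarith)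
    linarith
  exact ((continuous_const.sub (gp_pow_cont hp)).continuousAt).rpow_const (Or.inl h1)

lemma gp_contOn {p : ℝ} (hp : 1 < p) {x : ℝ} (hx : x < 1) : ContinuousOn (gp p) (Icc 0 x) := by
  apply ContinuousOn.rpow_const ((continuous_const.sub (gp_pow_cont hp)).continuousOn)
  intro u hu
  left
  have : u ^ p < 1 := Real.rpow_lt_one hu.1 (lt_of_le_of_lt hu.2 hx) (by linarith)
  show (1:ℝ) - u ^ p ≠ 0
  linarith

lemma gp_intble {p : ℝ} (hp : 1 < p) {x : ℝ} (hx0 : 0 ≤ x) (hx : x < 1) :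
    IntervalIntegrable (gp p) MeasureTheory.volume 0 x := by
  apply ContinuousOn.intervalIntegrable
  rw [uIcc_of_le hx0]
  exact gp_contOn hp hx

lemma gp_one_le {p : ℝ} (hp : 1 < p) {u : ℝ} (hu0 : 0 ≤ u) (hu1 : u < 1) : 1 ≤ gp p u := by
  have h1 : (0:ℝ) < 1 - u ^ p := by
    have : u ^ p < 1 := Real.rpow_lt_one hu0 hu1 (by linarith)
    linarith
  have h2 : (1:ℝ) - u ^ p ≤ 1 := by
    have : 0 ≤ u ^ p := Real.rpow_nonneg hu0 p
    linarith
  refine Real.one_le_rpow_of_pos_of_le_one_of_nonpos h1 h2 ?_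
  have : (0:ℝ) < 1 / p := by positivity
  linarith

lemma gp_mono {p : ℝ} (hp : 1 < p) : MonotoneOn (gp p) (Ico (0:ℝ) 1) := by
  intro u hu v hv huv
  have hup : u ^ p ≤ v ^ p := Real.rpow_le_rpow hu.1 huv (by linarith)
  have hv1 : (0:ℝ) < 1 - v ^ p := by
    have : v ^ p < 1 := Real.rpow_lt_one hv.1 hv.2 (by linarith)
    linarith
  have hu1 : (0:ℝ) < 1 - u ^ p := by linarith
  unfold gp
  rw [Real.rpow_neg hu1.le, Real.rpow_neg hv1.le]
  apply inv_anti₀ (Real.rpow_pos_of_pos hv1 _)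
  exact Real.rpow_le_rpow hv1.le (by linarith) (by positivity)

end aux


section aux2

lemma arcsinp_eq (p x : ℝ) : arcsinp p x = ∫ u in (0:ℝ)..x, gp p u := rfl

lemma arcsinp_hasDeriv {p : ℝ} (hp : 1 < p) {x : ℝ} (hx : x ∈ Ioo (0:ℝ) 1) :
    HasDerivAt (arcsinp p) (gp p x) x := by
  have h : HasDerivAt (fun u => ∫ v in (0:ℝ)..u, gp p v) (gp p x) x := by
    apply intervalIntegral.integral_hasDerivAt_right (gp_intble hp hx.1.le hx.2)
    · exact ContinuousAt.stronglyMeasurableAtFilter isOpen_Ioo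
        (fun y hy => gp_contAt hp hy) x hx
    · exact gp_contAt hp hx
  exact h

lemma self_le_arcsinp {p : ℝ} (hp : 1 < p) {x : ℝ} (hx0 : 0 ≤ x) (hx1 : x < 1) :
    x ≤ arcsinp p x := by
  rw [arcsinp_eq]
  have h := intervalIntegral.integral_mono_on hx0
    (intervalIntegrable_const : IntervalIntegrable (fun _ => (1:ℝ)) MeasureTheory.volume 0 x)
    (gp_intble hp hx0 hx1)
    (fun u hu => gp_one_le hp hu.1 (lt_of_le_of_lt hu.2 hx1))
  simpa using h

lemma arcsinp_add {p : ℝ} (hp : 1 < p) {x y : ℝ} (hx0 : 0 ≤ x) (hxy : x ≤ y) (hy1 : y < 1) :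
    arcsinp p y = arcsinp p x + ∫ u in x..y, gp p u := by
  rw [arcsinp_eq, arcsinp_eq]
  rw [intervalIntegral.integral_add_adjacent_intervals (gp_intble hp hx0 (lt_of_le_of_lt hxy hy1))]
  apply ContinuousOn.intervalIntegrable
  rw [uIcc_of_le hxy]
  exact (gp_contOn hp hy1).mono (Icc_subset_Icc hx0 le_rfl)

lemma arcsinp_strictMonoOn {p : ℝ} (hp : 1 < p) {x y : ℝ} (hx0 : 0 ≤ x) (hxy : x < y)
    (hy1 : y < 1) : arcsinp p x < arcsinp p y := by
  rw [arcsinp_add hp hx0 hxy.le hy1]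
  have h2 : IntervalIntegrable (gp p) MeasureTheory.volume x y := by
    apply ContinuousOn.intervalIntegrable
    rw [uIcc_of_le hxy.le]
    exact (gp_contOn hp hy1).mono (Icc_subset_Icc hx0 le_rfl)
  have h := intervalIntegral.integral_mono_on hxy.le
    (intervalIntegrable_const : IntervalIntegrable (fun _ => (1:ℝ)) MeasureTheory.volume x y) h2
    (fun u hu => gp_one_le hp (le_trans hx0 hu.1) (lt_of_le_of_lt hu.2 hy1))
  simp only [intervalIntegral.integral_const, smul_eq_mul, mul_one] at h
  linarith

lemma arcsinp_pos {p : ℝ} (hp : 1 < p) {x : ℝ} (hx : x ∈ Ioo (0:ℝ) 1) : 0 < arcsinp p x :=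
  lt_of_lt_of_le hx.1 (self_le_arcsinp hp hx.1.le hx.2)

lemma arcsinp_slope_mono {p : ℝ} (hp : 1 < p) {x y : ℝ} (hx0 : 0 < x) (hxy : x ≤ y)
    (hy1 : y < 1) : arcsinp p x / x ≤ arcsinp p y / y := by
  rcases eq_or_lt_of_le hxy with rfl | hlt
  · exact le_rfl
  have hx1 : x < 1 := lt_of_le_of_lt hxy hy1
  have key1 : arcsinp p x ≤ x * gp p x := by
    rw [arcsinp_eq]
    have h := intervalIntegral.integral_mono_on hx0.le (gp_intble hp hx0.le hx1)
      (intervalIntegrable_const : IntervalIntegrable (fun _ => gp p x) MeasureTheory.volume 0 x)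
      (fun u hu => gp_mono hp ⟨hu.1, lt_of_le_of_lt hu.2 hx1⟩ ⟨hx0.le, hx1⟩ hu.2)
    simpa [mul_comm] using h
  have hintble : IntervalIntegrable (gp p) MeasureTheory.volume x y := by
    apply ContinuousOn.intervalIntegrable
    rw [uIcc_of_le hxy]
    exact (gp_contOn hp hy1).mono (Icc_subset_Icc hx0.le le_rfl)
  have key2 : (y - x) * gp p x ≤ ∫ u in x..y, gp p u := by
    have h := intervalIntegral.integral_mono_on hxy
      (intervalIntegrable_const : IntervalIntegrable (fun _ => gp p x) MeasureTheory.volume x y)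
      hintble
      (fun u hu => gp_mono hp ⟨hx0.le, hx1⟩ ⟨le_trans hx0.le hu.1, lt_of_le_of_lt hu.2 hy1⟩ hu.1)
    simpa [mul_comm] using h
  have hFy : arcsinp p y = arcsinp p x + ∫ u in x..y, gp p u := arcsinp_add hp hx0.le hxy hy1
  rw [div_le_div_iff₀ hx0 (lt_of_lt_of_le hx0 hxy)]
  have hgpos : 0 < gp p x := lt_of_lt_of_le one_pos (gp_one_le hp hx0.le hx1)
  nlinarith [mul_le_mul_of_nonneg_left key2 hx0.le, mul_le_mul_of_nonneg_left key1 (sub_nonneg.mpr hxy)]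

end aux2

noncomputable def hAux (p t u : ℝ) : ℝ := (arcsinp p (u ^ (1 / t))) ^ t

noncomputable def hDer (p t u : ℝ) : ℝ :=
  (arcsinp p (u ^ (1 / t)) / u ^ (1 / t)) ^ (t - 1) * gp p (u ^ (1 / t))

section aux3

lemma rpow_inv_mem {t : ℝ} (ht : 1 ≤ t) {u : ℝ} (hu : u ∈ Ioo (0:ℝ) 1) :
    u ^ (1 / t) ∈ Ioo (0:ℝ) 1 := by
  have ht0 : (0:ℝ) < t := lt_of_lt_of_le one_pos ht
  exact ⟨Real.rpow_pos_of_pos hu.1 _, Real.rpow_lt_one hu.1.le hu.2 (by positivity)⟩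

lemma hAux_hasDeriv {p t : ℝ} (hp : 1 < p) (ht : 1 ≤ t) {u : ℝ} (hu : u ∈ Ioo (0:ℝ) 1) :
    HasDerivAt (hAux p t) (hDer p t u) u := by
  have ht0 : (0:ℝ) < t := lt_of_lt_of_le one_pos ht
  set x := u ^ (1 / t) with hxdef
  have hx : x ∈ Ioo (0:ℝ) 1 := rpow_inv_mem ht hu
  set A := arcsinp p x with hAdef
  have hApos : 0 < A := arcsinp_pos hp hx
  have h1 : HasDerivAt (fun w : ℝ => w ^ (1 / t)) (1 / t * u ^ (1 / t - 1)) u :=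
    Real.hasDerivAt_rpow_const (Or.inl hu.1.ne')
  have h2 : HasDerivAt (arcsinp p) (gp p x) x := arcsinp_hasDeriv hp hx
  have h3 : HasDerivAt (fun c : ℝ => c ^ t) (t * A ^ (t - 1)) A :=
    Real.hasDerivAt_rpow_const (Or.inr ht)
  have full := (h3.comp x h2).comp u h1
  have heq : hDer p t u = t * A ^ (t - 1) * gp p x * (1 / t * u ^ (1 / t - 1)) := by
    have hxt : (0:ℝ) < x ^ (t - 1) := Real.rpow_pos_of_pos hx.1 _
    have e0 : x ^ (t - 1) = u ^ (1 / t * (t - 1)) := (Real.rpow_mul hu.1.le _ _).symm ▸ rfl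
    have e1 : u ^ (1 / t - 1) = (x ^ (t - 1))⁻¹ := by
      rw [e0, ← Real.rpow_neg hu.1.le]
      congr 1
      field_simp
      ring
    have e2 : (A / x) ^ (t - 1) = A ^ (t - 1) / x ^ (t - 1) :=
      Real.div_rpow hApos.le hx.1.le _
    rw [hDer, e1, e2]
    field_simp
    ring
  rw [heq]
  exact full

lemma hAux_convexOn {p t : ℝ} (hp : 1 < p) (ht : 1 ≤ t) :
    ConvexOn ℝ (Ioo (0:ℝ) 1) (hAux p t) := by
  have hint : interior (Ioo (0:ℝ) 1) = Ioo (0:ℝ) 1 := interior_Ioo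
  apply MonotoneOn.convexOn_of_deriv (convex_Ioo 0 1)
  · exact fun u hu => ((hAux_hasDeriv hp ht hu).continuousAt).continuousWithinAt
  · rw [hint]
    exact fun u hu => ((hAux_hasDeriv hp ht hu).differentiableAt).differentiableWithinAt
  · rw [hint]
    intro u hu v hv huv
    rw [(hAux_hasDeriv hp ht hu).deriv, (hAux_hasDeriv hp ht hv).deriv]
    set x := u ^ (1 / t)
    set y := v ^ (1 / t)
    have hx : x ∈ Ioo (0:ℝ) 1 := rpow_inv_mem ht hu
    have hy : y ∈ Ioo (0:ℝ) 1 := rpow_inv_mem ht hv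
    have hxy : x ≤ y := Real.rpow_le_rpow hu.1.le huv (by positivity)
    have f1 : (arcsinp p x / x) ^ (t - 1) ≤ (arcsinp p y / y) ^ (t - 1) :=
      Real.rpow_le_rpow (div_nonneg (arcsinp_pos hp hx).le hx.1.le)
        (arcsinp_slope_mono hp hx.1 hxy hy.2) (by linarith)
    have f2 : gp p x ≤ gp p y := gp_mono hp ⟨hx.1.le, hx.2⟩ ⟨hy.1.le, hy.2⟩ hxy
    have hg0 : 0 ≤ gp p x := le_trans zero_le_one (gp_one_le hp hx.1.le hx.2)
    exact mul_le_mul f1 f2 hg0 (Real.rpow_nonneg (div_nonneg (arcsinp_pos hp hy).le hy.1.le) _)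

end aux3

section aux4

lemma powerMean_mem {t : ℝ} (ht : 1 ≤ t) {a b : ℝ} (ha : a ∈ Ioo (0:ℝ) 1)
    (hb : b ∈ Ioo (0:ℝ) 1) : powerMean t a b ∈ Ioo (0:ℝ) 1 := by
  have ht0 : (0:ℝ) < t := lt_of_lt_of_le one_pos ht
  have hu : a ^ t ∈ Ioo (0:ℝ) 1 := ⟨Real.rpow_pos_of_pos ha.1 t, Real.rpow_lt_one ha.1.le ha.2 ht0⟩
  have hv : b ^ t ∈ Ioo (0:ℝ) 1 := ⟨Real.rpow_pos_of_pos hb.1 t, Real.rpow_lt_one hb.1.le hb.2 ht0⟩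
  have hm : (a ^ t + b ^ t) / 2 ∈ Ioo (0:ℝ) 1 := ⟨by linarith [hu.1, hv.1], by linarith [hu.2, hv.2]⟩
  rw [powerMean, if_neg ht0.ne']
  exact rpow_inv_mem ht hm

lemma arcsinp_powerMean_le_s4 {p t : ℝ} (hp : 1 < p) (ht : 1 ≤ t) {a b : ℝ}
    (ha : a ∈ Ioo (0:ℝ) 1) (hb : b ∈ Ioo (0:ℝ) 1) :
    arcsinp p (powerMean t a b) ≤ powerMean t (arcsinp p a) (arcsinp p b) := by
  have ht0 : (0:ℝ) < t := lt_of_lt_of_le one_pos ht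
  have htne : t ≠ 0 := ht0.ne'
  have hu : a ^ t ∈ Ioo (0:ℝ) 1 := ⟨Real.rpow_pos_of_pos ha.1 t, Real.rpow_lt_one ha.1.le ha.2 ht0⟩
  have hv : b ^ t ∈ Ioo (0:ℝ) 1 := ⟨Real.rpow_pos_of_pos hb.1 t, Real.rpow_lt_one hb.1.le hb.2 ht0⟩
  have hm : (a ^ t + b ^ t) / 2 ∈ Ioo (0:ℝ) 1 := ⟨by linarith [hu.1, hv.1], by linarith [hu.2, hv.2]⟩
  have hconv := (hAux_convexOn hp ht).2 hu hv (by norm_num : (0:ℝ) ≤ 1/2)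
    (by norm_num : (0:ℝ) ≤ 1/2) (by norm_num)
  simp only [smul_eq_mul] at hconv
  have hmids : (1/2 : ℝ) * a ^ t + (1/2 : ℝ) * b ^ t = (a ^ t + b ^ t) / 2 := by ring
  rw [hmids] at hconv
  have ea : (a ^ t) ^ (1/t) = a := by rw [one_div, Real.rpow_rpow_inv ha.1.le htne]
  have eb : (b ^ t) ^ (1/t) = b := by rw [one_div, Real.rpow_rpow_inv hb.1.le htne]
  unfold hAux at hconv
  rw [ea, eb] at hconv
  set M := ((a ^ t + b ^ t) / 2) ^ (1/t) with hMdef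
  have hMmem : M ∈ Ioo (0:ℝ) 1 := rpow_inv_mem ht hm
  have key : (arcsinp p M) ^ t ≤ ((arcsinp p a) ^ t + (arcsinp p b) ^ t) / 2 := by
    linarith
  rw [powerMean, powerMean, if_neg htne, if_neg htne, ← hMdef]
  have estep : arcsinp p M = ((arcsinp p M) ^ t) ^ (1/t) := by
    rw [one_div, Real.rpow_rpow_inv (arcsinp_pos hp hMmem).le htne]
  rw [estep]
  exact Real.rpow_le_rpow (Real.rpow_nonneg (arcsinp_pos hp hMmem).le _) key (by positivity)

end aux4

lemma pip_ge_two {p : ℝ} (hp : 1 < p) : 2 ≤ pip p := by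
  have hppos : (0:ℝ) < p := by linarith
  have h1 : 0 < Real.pi / p := by positivity
  have h2 : Real.pi / p < Real.pi := by
    rw [div_lt_iff₀ hppos]
    nlinarith [Real.pi_pos]
  have hsinpos : 0 < Real.sin (Real.pi / p) := Real.sin_pos_of_pos_of_lt_pi h1 h2
  have hsinle : Real.sin (Real.pi / p) ≤ Real.pi / p := Real.sin_le h1.le
  have hd : p * Real.sin (Real.pi / p) ≤ Real.pi := by
    calc p * Real.sin (Real.pi / p) ≤ p * (Real.pi / p) :=
          mul_le_mul_of_nonneg_left hsinle hppos.le
      _ = Real.pi := by field_simp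
  have hd0 : 0 < p * Real.sin (Real.pi / p) := by positivity
  rw [pip, le_div_iff₀ hd0]
  linarith


theorem sinp_powerMean_ge (p t : ℝ) (hp : 1 < p) (ht : 1 ≤ t)
    (sinp : ℝ → ℝ)
    (hmem : ∀ y ∈ Set.Ioo (0:ℝ) (pip p / 2), sinp y ∈ Set.Ioo (0:ℝ) 1)
    (hinv : ∀ y ∈ Set.Ioo (0:ℝ) (pip p / 2), arcsinp p (sinp y) = y)
    (r s : ℝ) (hr : r ∈ Set.Ioo (0:ℝ) 1) (hs : s ∈ Set.Ioo (0:ℝ) 1) :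
    powerMean t (sinp r) (sinp s) ≤ sinp (powerMean t r s) := by
  have h2 := pip_ge_two hp
  have hsub : Ioo (0:ℝ) 1 ⊆ Ioo (0:ℝ) (pip p / 2) :=
    fun y hy => ⟨hy.1, lt_of_lt_of_le hy.2 (by linarith)⟩
  have ha := hmem r (hsub hr)
  have hb := hmem s (hsub hs)
  have hm : powerMean t r s ∈ Ioo (0:ℝ) 1 := powerMean_mem ht hr hs
  have hc := hmem _ (hsub hm)
  have hFc : arcsinp p (sinp (powerMean t r s)) = powerMean t r s := hinv _ (hsub hm)
  have hFa : arcsinp p (sinp r) = r := hinv r (hsub hr)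
  have hFb : arcsinp p (sinp s) = s := hinv s (hsub hs)
  have hP : powerMean t (sinp r) (sinp s) ∈ Ioo (0:ℝ) 1 := powerMean_mem ht ha hb
  have key : arcsinp p (powerMean t (sinp r) (sinp s)) ≤ powerMean t r s := by
    have h := arcsinp_powerMean_le_s4 hp ht ha hb
    rwa [hFa, hFb] at h
  by_contra hcon
  push_neg at hcon
  have hlt := arcsinp_strictMonoOn hp hc.1.le hcon hP.2
  rw [hFc] at hlt
  linarith
end

section
/- For every p > 1, every t ≥ 1, and all r, s ∈ (0, b_p) where b_p = arctan_p(1), one has tan_p(M_t(r,s)) ≤ M_t(tan_p(r), tan_p(s)). -/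
open Real Set

namespace TanpAux

open MeasureTheory intervalIntegral

variable {p t : ℝ}

lemma f_pos (hp : 0 < p) {x : ℝ} (hx : 0 ≤ x) : 0 < (1 + x ^ p)⁻¹ := by
  have := Real.rpow_nonneg hx p
  positivity

lemma f_contAt (hp : 0 < p) {x : ℝ} (hx : 0 ≤ x) :
    ContinuousAt (fun u : ℝ => (1 + u ^ p)⁻¹) x := by
  have h1 : ContinuousAt (fun u : ℝ => 1 + u ^ p) x :=
    continuousAt_const.add (Real.continuousAt_rpow_const x p (Or.inr hp.le))
  exact h1.inv₀ (by have := Real.rpow_nonneg hx p; positivity)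

lemma f_int (hp : 0 < p) {a b : ℝ} (ha : 0 ≤ a) (hb : 0 ≤ b) :
    IntervalIntegrable (fun u : ℝ => (1 + u ^ p)⁻¹) volume a b := by
  apply ContinuousOn.intervalIntegrable
  intro x hx
  have hx0 : 0 ≤ x := le_trans (le_min ha hb) (by
    rcases hx with ⟨h1, _⟩; simpa [min_def] using h1)
  exact (f_contAt hp hx0).continuousWithinAt

lemma f_anti (hp : 0 < p) {u v : ℝ} (hu : 0 ≤ u) (huv : u ≤ v) :
    (1 + v ^ p)⁻¹ ≤ (1 + u ^ p)⁻¹ := by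
  have h1 : u ^ p ≤ v ^ p := Real.rpow_le_rpow hu huv hp.le
  have h2 : 0 ≤ u ^ p := Real.rpow_nonneg hu p
  have h3 : (0:ℝ) < 1 + u ^ p := by linarith
  exact inv_anti₀ h3 (by linarith)

lemma arctanp_sub (hp : 0 < p) {a b : ℝ} (ha : 0 ≤ a) (hb : 0 ≤ b) :
    arctanp p b - arctanp p a = ∫ u in a..b, (1 + u ^ p)⁻¹ := by
  have := intervalIntegral.integral_add_adjacent_intervals
    (f_int hp le_rfl ha) (f_int hp ha hb)
  unfold arctanp
  linarith

lemma arctanp_strictMono (hp : 0 < p) {a b : ℝ} (ha : 0 ≤ a) (hab : a < b) :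
    arctanp p a < arctanp p b := by
  have hpos : 0 < ∫ u in a..b, (1 + u ^ p)⁻¹ :=
    intervalIntegral.intervalIntegral_pos_of_pos_on (f_int hp ha (ha.trans hab.le))
      (fun x hx => f_pos hp (ha.trans hx.1.le)) hab
  have := arctanp_sub hp ha (ha.trans hab.le)
  linarith

lemma arctanp_pos (hp : 0 < p) {a : ℝ} (ha : 0 < a) : 0 < arctanp p a := by
  have h0 : arctanp p 0 = 0 := by unfold arctanp; simp
  have := arctanp_strictMono hp le_rfl ha
  linarith

lemma arctanp_ratio (hp : 0 < p) {v w : ℝ} (hv : 0 < v) (hvw : v ≤ w) :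
    arctanp p w * v ≤ arctanp p v * w := by
  set f : ℝ → ℝ := fun u => (1 + u ^ p)⁻¹ with hf
  have hw : 0 ≤ w := hv.le.trans hvw
  have hup : arctanp p w - arctanp p v ≤ (w - v) * f v := by
    rw [arctanp_sub hp hv.le hw]
    calc (∫ u in v..w, f u) ≤ ∫ _u in v..w, f v := by
          apply intervalIntegral.integral_mono_on hvw (f_int hp hv.le hw)
            intervalIntegrable_const
          intro x hx
          exact f_anti hp hv.le hx.1
      _ = (w - v) * f v := by simp [smul_eq_mul]
  have hlow : v * f v ≤ arctanp p v := by
    have : arctanp p v - arctanp p 0 = ∫ u in (0:ℝ)..v, f u := arctanp_sub hp le_rfl hv.le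
    have h0 : arctanp p 0 = 0 := by unfold arctanp; simp
    have hle : (∫ _u in (0:ℝ)..v, f v) ≤ ∫ u in (0:ℝ)..v, f u := by
      apply intervalIntegral.integral_mono_on hv.le intervalIntegrable_const
        (f_int hp le_rfl hv.le)
      intro x hx
      exact f_anti hp hx.1 hx.2
    have heq : (∫ _u in (0:ℝ)..v, f v) = v * f v := by simp [smul_eq_mul]
    linarith
  have hfv : 0 ≤ f v := (f_pos hp hv.le).le
  nlinarith [sub_nonneg.mpr hvw]

lemma arctanp_hasDerivAt (hp : 0 < p) {v : ℝ} (hv : 0 < v) :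
    HasDerivAt (arctanp p) ((1 + v ^ p)⁻¹) v :=
  intervalIntegral.integral_hasDerivAt_right (f_int hp le_rfl hv.le)
    (ContinuousAt.stronglyMeasurableAtFilter isOpen_Ioi
      (fun x (hx : x ∈ Ioi (0:ℝ)) => f_contAt hp (le_of_lt hx)) v hv)
    (f_contAt hp hv.le)

/-- The derivative of `h u = (arctanp p (u ^ (1/t)))^t`. -/
lemma h_hasDerivAt (hp : 0 < p) (ht : 1 ≤ t) {u : ℝ} (hu : 0 < u) :
    HasDerivAt (fun z : ℝ => (arctanp p (z ^ (1 / t))) ^ t)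
      ((arctanp p (u ^ (1 / t)) / u ^ (1 / t)) ^ (t - 1) * (1 + (u ^ (1 / t)) ^ p)⁻¹) u := by
  have ht0 : t ≠ 0 := by linarith
  set v : ℝ := u ^ (1 / t) with hvdef
  have hv : 0 < v := Real.rpow_pos_of_pos hu _
  have hFv : 0 < arctanp p v := arctanp_pos hp hv
  have d1 : HasDerivAt (fun z : ℝ => z ^ (1 / t)) (1 / t * u ^ (1 / t - 1)) u :=
    Real.hasDerivAt_rpow_const (Or.inl hu.ne')
  have d2 : HasDerivAt (arctanp p) ((1 + v ^ p)⁻¹) v := arctanp_hasDerivAt hp hv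
  have d3 : HasDerivAt (fun z : ℝ => z ^ t) (t * (arctanp p v) ^ (t - 1)) (arctanp p v) :=
    Real.hasDerivAt_rpow_const (Or.inl hFv.ne')
  have dd := (d3.comp v d2).comp u d1
  simp only [Function.comp_def] at dd
  refine dd.congr_deriv ?_
  have e1 : u ^ (1 / t - 1) = (v ^ (t - 1))⁻¹ := by
    have h1 : v ^ (t - 1) = u ^ (1 - 1 / t) := by
      rw [hvdef, ← Real.rpow_mul hu.le]
      congr 1
      field_simp
    rw [show (1 / t - 1) = -(1 - 1 / t) by ring, Real.rpow_neg hu.le, h1]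
  rw [e1, Real.div_rpow hFv.le hv.le]
  have hv1 : 0 < v ^ (t - 1) := Real.rpow_pos_of_pos hv _
  field_simp

/-- Midpoint concavity consequence. -/
lemma h_concave (hp : 0 < p) (ht : 1 ≤ t) {A B : ℝ} (hA : 0 < A) (hB : 0 < B) :
    ((arctanp p (A ^ (1 / t))) ^ t + (arctanp p (B ^ (1 / t))) ^ t) / 2
      ≤ (arctanp p (((A + B) / 2) ^ (1 / t))) ^ t := by
  have ht0 : (0:ℝ) < t := by linarith
  set h : ℝ → ℝ := fun z => (arctanp p (z ^ (1 / t))) ^ t with hhdef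
  set a : ℝ := min A B
  set b : ℝ := max A B
  have ha : 0 < a := lt_min hA hB
  have hab : a ≤ b := min_le_max
  have hconc : ConcaveOn ℝ (Icc a b) h := by
    apply AntitoneOn.concaveOn_of_deriv (convex_Icc a b)
    · intro x hx
      exact ((h_hasDerivAt hp ht (ha.trans_le hx.1)).continuousAt).continuousWithinAt
    · intro x hx
      rw [interior_Icc] at hx
      exact ((h_hasDerivAt hp ht (ha.trans hx.1)).differentiableAt).differentiableWithinAt
    · rw [interior_Icc]
      intro x hx y hy hxy
      have hx0 : 0 < x := ha.trans hx.1
      have hy0 : 0 < y := ha.trans hy.1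
      rw [(h_hasDerivAt hp ht hx0).deriv, (h_hasDerivAt hp ht hy0).deriv]
      set vx := x ^ (1 / t)
      set vy := y ^ (1 / t)
      have hvx : 0 < vx := Real.rpow_pos_of_pos hx0 _
      have hvy : 0 < vy := Real.rpow_pos_of_pos hy0 _
      have hvxy : vx ≤ vy := Real.rpow_le_rpow hx0.le hxy (by positivity)
      have hratio : arctanp p vy / vy ≤ arctanp p vx / vx := by
        rw [div_le_div_iff₀ hvy hvx]
        exact arctanp_ratio hp hvx hvxy
      have h1 : (arctanp p vy / vy) ^ (t - 1) ≤ (arctanp p vx / vx) ^ (t - 1) :=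
        Real.rpow_le_rpow (div_nonneg (arctanp_pos hp hvy).le hvy.le) hratio (by linarith)
      have h2 : (1 + vy ^ p)⁻¹ ≤ (1 + vx ^ p)⁻¹ := f_anti hp hvx.le hvxy
      have h3 : (0:ℝ) ≤ (arctanp p vy / vy) ^ (t - 1) :=
        Real.rpow_nonneg (div_nonneg (arctanp_pos hp hvy).le hvy.le) _
      have h4 : (0:ℝ) ≤ (1 + vy ^ p)⁻¹ := (f_pos hp hvy.le).le
      exact mul_le_mul h1 h2 h4 (Real.rpow_nonneg (div_nonneg (arctanp_pos hp hvx).le hvx.le) _)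
  have hAmem : A ∈ Icc a b := ⟨min_le_left _ _, le_max_left _ _⟩
  have hBmem : B ∈ Icc a b := ⟨min_le_right _ _, le_max_right _ _⟩
  have := hconc.2 hAmem hBmem (by norm_num : (0:ℝ) ≤ 1/2) (by norm_num : (0:ℝ) ≤ 1/2)
    (by norm_num)
  simp only [smul_eq_mul] at this
  calc (h A + h B) / 2 = 1/2 * h A + 1/2 * h B := by ring
    _ ≤ h (1/2 * A + 1/2 * B) := this
    _ = h ((A + B) / 2) := by congr 1; ring

end TanpAux

theorem tanp_powerMean_le (p t : ℝ) (hp : 1 < p) (ht : 1 ≤ t)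
    (tanp : ℝ → ℝ)
    (hmem : ∀ y ∈ Set.Ioo (0:ℝ) (arctanp p 1), tanp y ∈ Set.Ioo (0:ℝ) 1)
    (hinv : ∀ y ∈ Set.Ioo (0:ℝ) (arctanp p 1), arctanp p (tanp y) = y)
    (r s : ℝ) (hr : r ∈ Set.Ioo (0:ℝ) (arctanp p 1)) (hs : s ∈ Set.Ioo (0:ℝ) (arctanp p 1)) :
    tanp (powerMean t r s) ≤ powerMean t (tanp r) (tanp s) := by
  have hp0 : 0 < p := by linarith
  have ht0 : t ≠ 0 := by linarith
  have ht0' : (0:ℝ) < t := by linarith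
  obtain ⟨hrpos, hrlt⟩ := hr
  obtain ⟨hspos, hslt⟩ := hs
  set x := tanp r with hxd
  set y := tanp s with hyd
  obtain ⟨hxpos, hxlt⟩ := hmem r ⟨hrpos, hrlt⟩
  obtain ⟨hypos, hylt⟩ := hmem s ⟨hspos, hslt⟩
  have hFx : arctanp p x = r := hinv r ⟨hrpos, hrlt⟩
  have hFy : arctanp p y = s := hinv s ⟨hspos, hslt⟩
  have hrt : 0 < r ^ t := Real.rpow_pos_of_pos hrpos t
  have hst : 0 < s ^ t := Real.rpow_pos_of_pos hspos t
  have hM1 : powerMean t r s = ((r ^ t + s ^ t) / 2) ^ (1 / t) := by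
    rw [powerMean, if_neg ht0]
  have hMpos : 0 < powerMean t r s := by
    rw [hM1]; apply Real.rpow_pos_of_pos; linarith
  have hMlt : powerMean t r s < arctanp p 1 := by
    set m := max r s with hmd
    have hm0 : 0 < m := lt_max_of_lt_left hrpos
    have h1 : r ^ t ≤ m ^ t := Real.rpow_le_rpow hrpos.le (le_max_left _ _) ht0'.le
    have h2 : s ^ t ≤ m ^ t := Real.rpow_le_rpow hspos.le (le_max_right _ _) ht0'.le
    have h3 : powerMean t r s ≤ m := by
      rw [hM1]
      calc ((r ^ t + s ^ t) / 2) ^ (1 / t) ≤ (m ^ t) ^ (1 / t) :=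
            Real.rpow_le_rpow (by linarith) (by linarith) (by positivity)
        _ = m := by rw [one_div, Real.rpow_rpow_inv hm0.le ht0]
    exact lt_of_le_of_lt h3 (max_lt hrlt hslt)
  set c := tanp (powerMean t r s) with hcd
  obtain ⟨hcpos, hclt⟩ := hmem _ ⟨hMpos, hMlt⟩
  have hFc : arctanp p c = powerMean t r s := hinv _ ⟨hMpos, hMlt⟩
  -- the concavity inequality with A = x^t, B = y^t
  have hA : 0 < x ^ t := Real.rpow_pos_of_pos hxpos t
  have hB : 0 < y ^ t := Real.rpow_pos_of_pos hypos t
  have hkey := TanpAux.h_concave hp0 ht hA hB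
  rw [show (x ^ t) ^ (1 / t) = x by rw [one_div, Real.rpow_rpow_inv hxpos.le ht0],
      show (y ^ t) ^ (1 / t) = y by rw [one_div, Real.rpow_rpow_inv hypos.le ht0],
      hFx, hFy] at hkey
  set M := powerMean t x y with hMd
  have hM2 : M = ((x ^ t + y ^ t) / 2) ^ (1 / t) := by rw [hMd, powerMean, if_neg ht0]
  have hMpos' : 0 < M := by rw [hM2]; apply Real.rpow_pos_of_pos; linarith
  rw [← hM2] at hkey
  -- (arctanp p c)^t = (r^t + s^t)/2
  have hFct : (arctanp p c) ^ t = (r ^ t + s ^ t) / 2 := by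
    rw [hFc, hM1, one_div, Real.rpow_inv_rpow (by linarith) ht0]
  -- compare
  have hcompare : (arctanp p c) ^ t ≤ (arctanp p M) ^ t := by
    rw [hFct]; exact hkey
  have hFM : 0 < arctanp p M := TanpAux.arctanp_pos hp0 hMpos'
  have hFc' : 0 < arctanp p c := by rw [hFc]; exact hMpos
  have hle : arctanp p c ≤ arctanp p M := by
    by_contra hcon
    push_neg at hcon
    have := Real.rpow_lt_rpow hFM.le hcon ht0'
    linarith
  by_contra hcon
  push_neg at hcon
  have := TanpAux.arctanp_strictMono hp0 hMpos'.le hcon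
  linarith
end
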